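/- arXiv:2312.12215 — 11 statements merged into one kernel-verified Lean document; each statement's English description precedes it below -/
import Mathlib

section
/- Let F be an arbitrary field and G a finite group. Then the F-vector space of inner derivations of the group algebra FG has dimension |G| − r over F, where r is the number of conjugacy classes of G. -/
open MonoidAlgebra

/-- The `F`-linear map sending `β ∈ FG` to the inner derivation
`d_β : α ↦ α * β - β * α` of the group algebra `FG`. -/
noncomputable def innerDerivMap (F G : Type*) [Field F] [Group G] :
    MonoidAlgebra F G →ₗ[F] Module.End F (MonoidAlgebra F G) where
  toFun β :=
    { toFun := fun α => α * β - β * α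
      map_add' := by intro x y; noncomm_ring
      map_smul' := by intro c x; simp [smul_mul_assoc, mul_smul_comm, smul_sub] }
  map_add' := by
    intro β γ; refine LinearMap.ext fun α => ?_
    simp only [LinearMap.coe_mk, AddHom.coe_mk, LinearMap.add_apply]
    noncomm_ring
  map_smul' := by
    intro c β; refine LinearMap.ext fun α => ?_
    simp [smul_mul_assoc, mul_smul_comm, smul_sub]

/-!
By rank–nullity it suffices to show that the kernel of `β ↦ d_β`, the centre of `FG`, has
dimension `r`. An element of `FG` is central iff it commutes with every `g ∈ G`, i.e. iff its
coefficient function is constant on conjugacy classes; so the centre is the isomorphic image of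
the functions on `ConjClasses G`.
-/

namespace MonoidAlgebra

variable {k G : Type*}

theorem forall_commute_iff_commute_of [CommSemiring k] [Monoid G] (β : MonoidAlgebra k G) :
    (∀ α, Commute α β) ↔ ∀ g, Commute (of k G g) β :=
  ⟨fun h _ => h _, fun h α =>
    α.induction_on (motive := fun α => Commute α β) h (fun _ _ => Commute.add_left)
      fun r _ hα => hα.smul_left r⟩

theorem commute_of_iff [Semiring k] [Group G] (g : G) (β : MonoidAlgebra k G) :
    Commute (of k G g) β ↔ ∀ x, β.coeff (g * x * g⁻¹) = β.coeff x := by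
  rw [Commute, SemiconjBy, ← coeff_inj, Finsupp.ext_iff, ← (Equiv.mulLeft g).forall_congr_right]
  simp [of_apply, mul_assoc, eq_comm]

theorem forall_commute_iff_isConj [CommSemiring k] [Group G] (β : MonoidAlgebra k G) :
    (∀ α, Commute α β) ↔ ∀ x y, IsConj x y → β.coeff x = β.coeff y := by
  simp only [forall_commute_iff_commute_of, commute_of_iff, isConj_iff]
  constructor
  · rintro h x _ ⟨g, rfl⟩
    exact (h g x).symm
  · exact fun h g x => (h x _ ⟨g, rfl⟩).symm

variable (k G) in
noncomputable def ofConjClassFun [Semiring k] [Group G] [Finite G] :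
    (ConjClasses G → k) →ₗ[k] MonoidAlgebra k G :=
  (basis G k).equivFun.symm.toLinearMap ∘ₗ LinearMap.funLeft k k ConjClasses.mk

section ofConjClassFun

variable [Semiring k] [Group G] [Finite G]

theorem coeff_ofConjClassFun (f : ConjClasses G → k) (x : G) :
    (ofConjClassFun k G f).coeff x = f (ConjClasses.mk x) :=
  rfl

theorem ofConjClassFun_injective : Function.Injective (ofConjClassFun k G) :=
  (basis G k).equivFun.symm.injective.comp <|
    LinearMap.funLeft_injective_of_surjective _ _ _ ConjClasses.mk_surjective

theorem mem_range_ofConjClassFun_iff (β : MonoidAlgebra k G) :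
    β ∈ LinearMap.range (ofConjClassFun k G) ↔ ∀ x y, IsConj x y → β.coeff x = β.coeff y := by
  constructor
  · rintro ⟨f, rfl⟩ x y hxy
    simp only [coeff_ofConjClassFun, ConjClasses.mk_eq_mk_iff_isConj.mpr hxy]
  · intro h
    refine ⟨Quotient.lift β.coeff h, ?_⟩
    ext x
    exact coeff_ofConjClassFun _ x

end ofConjClassFun

end MonoidAlgebra

theorem mem_ker_innerDerivMap_iff {F G : Type*} [Field F] [Group G] (β : MonoidAlgebra F G) :
    β ∈ LinearMap.ker (innerDerivMap F G) ↔ ∀ α, Commute α β := by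
  simp only [LinearMap.mem_ker, LinearMap.ext_iff, LinearMap.zero_apply]
  exact forall_congr' fun α => sub_eq_zero

theorem ker_innerDerivMap_eq_range_ofConjClassFun (F G : Type*) [Field F] [Group G] [Finite G] :
    LinearMap.ker (innerDerivMap F G) = LinearMap.range (ofConjClassFun F G) := by
  ext β
  rw [mem_ker_innerDerivMap_iff, forall_commute_iff_isConj, mem_range_ofConjClassFun_iff]

/-- The space of inner derivations of `FG` has dimension `|G| - r` where `r` is
the number of conjugacy classes of `G`. -/
theorem finrank_innerDerivations_eq (F G : Type*) [Field F] [Group G] [Fintype G] :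
    Module.finrank F (LinearMap.range (innerDerivMap F G)) =
      Fintype.card G - Nat.card (ConjClasses G) := by
  classical
  have rank_nullity := (innerDerivMap F G).finrank_range_add_finrank_ker
  rw [ker_innerDerivMap_eq_range_ofConjClassFun,
    LinearMap.finrank_range_of_inj ofConjClassFun_injective, Module.finrank_fintype_fun_eq_card,
    ← Nat.card_eq_fintype_card, Module.finrank_eq_card_basis (basis G F)] at rank_nullity
  omega
end

section
/- Let n ≥ 3 and let F be a field of characteristic 0 or of odd prime characteristic p. In the group algebra F D_{2n} of the dihedral group D_{2n} = ⟨a, b | aⁿ = b² = (ab)² = 1⟩, the set {aⁱ − a⁻ⁱ, (aⁱ − a⁻ⁱ)b : i = 1, 2, ..., ⌊(n−1)/2⌋} is an F-basis of the anti-centralizer C̄(b) = {α ∈ F D_{2n} : αb = −bα}. -/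
open MonoidAlgebra

/-- The anti-centralizer `C̄(β) = {α | α β = - β α}` as an `F`-subspace of the
group algebra `FG`. -/
def antiCentralizer (F G : Type*) [Field F] [Group G] (β : MonoidAlgebra F G) :
    Submodule F (MonoidAlgebra F G) where
  carrier := {α | α * β = -(β * α)}
  add_mem' := by
    intro x y hx hy
    simp only [Set.mem_setOf_eq] at *
    rw [add_mul, mul_add, hx, hy, neg_add]
  zero_mem' := by simp
  smul_mem' := by
    intro c x hx
    simp only [Set.mem_setOf_eq] at *
    rw [smul_mul_assoc, hx, mul_smul_comm, smul_neg]

/-- `aD F n i` is the image of `a^i` (the `i`-th power of the rotation `a = r 1`)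
in the dihedral group algebra. -/
noncomputable def aD (F : Type*) [Field F] (n : ℕ) (i : ℤ) :
    MonoidAlgebra F (DihedralGroup n) :=
  MonoidAlgebra.of F (DihedralGroup n) (DihedralGroup.r (i : ZMod n))

/-- `bD F n` is the image of the reflection `b = sr 0` in the dihedral group algebra. -/
noncomputable def bD (F : Type*) [Field F] (n : ℕ) :
    MonoidAlgebra F (DihedralGroup n) :=
  MonoidAlgebra.of F (DihedralGroup n) (DihedralGroup.sr 0)

/-
Conjugation by `b` is the involution `τ` of `D_{2n}` with `aᵏ ↦ a⁻ᵏ`, `aᵏb ↦ a⁻ᵏb`, and `α`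
anticommutes with `b` exactly when its coefficients are `τ`-odd: `α (τ g) = - α g`. Since `2 ≠ 0`,
a `τ`-odd element vanishes on the fixed points of `τ`, so the `τ`-odd elements have the basis
`g - τ g`, with `g` running over one point of each two-element orbit. For `D_{2n}` one can take
the points `aⁱ` and `aⁱb` with `1 ≤ i ≤ ⌊(n-1)/2⌋`.
-/

open Function Set

/-- `e` picks exactly one point of every orbit `{x, τ x}` with `τ x ≠ x`. -/
structure IsFreeOrbitTransversal {X ι : Type*} (τ : X → X) (e : ι → X) : Prop where
  injective : Injective e
  ne_apply : ∀ i j, e i ≠ τ (e j)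
  mem_range_or : ∀ x, τ x ≠ x → x ∈ range e ∨ τ x ∈ range e

namespace MonoidAlgebra

variable {R X ι : Type*} [Ring R] {τ : X → X} {e : ι → X}

variable (R) in
def oddSubmodule (τ : X → X) : Submodule R (MonoidAlgebra R X) where
  carrier := {α | ∀ x, α.coeff (τ x) = -α.coeff x}
  add_mem' hα hβ x := by simp [hα x, hβ x, add_comm]
  zero_mem' := by simp
  smul_mem' c α hα x := by simp [hα x]

lemma mem_oddSubmodule {α : MonoidAlgebra R X} :
    α ∈ oddSubmodule R τ ↔ ∀ x, α.coeff (τ x) = -α.coeff x := Iff.rfl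

lemma antiCentralizer_of_eq_oddSubmodule {F G : Type*} [Field F] [Group G] (b : G) :
    antiCentralizer F G (of F G b) = oddSubmodule F (fun g => b * g * b⁻¹) := by
  ext α
  change α * of F G b = -(of F G b * α) ↔ _
  rw [mem_oddSubmodule, of_apply, ← coeff_inj, Finsupp.ext_iff]
  exact (Equiv.mulLeft b⁻¹).forall_congr (by simp)

variable (R) in
noncomputable def oddSingle (τ : X → X) (x : X) : MonoidAlgebra R X :=
  single x 1 - single (τ x) 1

lemma oddSingle_mem_oddSubmodule (hτ : Involutive τ) (x : X) :
    oddSingle R τ x ∈ oddSubmodule R τ := by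
  classical
  intro y
  simp only [oddSingle, coeff_sub, coeff_single, Finsupp.coe_sub, Pi.sub_apply,
    Finsupp.single_apply, hτ.injective.eq_iff, hτ.eq_iff, neg_sub]

lemma coeff_eq_zero_of_apply_eq [NoZeroDivisors R] (h2 : (2 : R) ≠ 0) {α : MonoidAlgebra R X}
    (hα : α ∈ oddSubmodule R τ) {x : X} (hx : τ x = x) : α.coeff x = 0 := by
  have := hα x
  rw [hx, eq_neg_iff_add_eq_zero, ← two_mul] at this
  exact (mul_eq_zero.mp this).resolve_left h2

lemma eq_of_coeff_eq_of_isFreeOrbitTransversal [NoZeroDivisors R] (h2 : (2 : R) ≠ 0)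
    (he : IsFreeOrbitTransversal τ e) {α β : MonoidAlgebra R X}
    (hα : α ∈ oddSubmodule R τ) (hβ : β ∈ oddSubmodule R τ)
    (h : ∀ i, α.coeff (e i) = β.coeff (e i)) : α = β := by
  ext x
  by_cases hx : τ x = x
  · rw [coeff_eq_zero_of_apply_eq h2 hα hx, coeff_eq_zero_of_apply_eq h2 hβ hx]
  obtain ⟨i, rfl⟩ | ⟨i, hi⟩ := he.mem_range_or x hx
  · exact h i
  · rw [← neg_inj, ← hα, ← hβ, ← hi, h]

lemma coeff_sum_smul_oddSingle [Fintype ι] (he : IsFreeOrbitTransversal τ e) (c : ι → R)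
    (i : ι) : (∑ j, c j • oddSingle R τ (e j)).coeff (e i) = c i := by
  classical
  simp [oddSingle, coeff_sum, Finsupp.single_apply, he.injective.eq_iff,
    Ne.symm (he.ne_apply i _)]

lemma linearIndependent_oddSingle [Fintype ι] (he : IsFreeOrbitTransversal τ e) :
    LinearIndependent R (fun i => oddSingle R τ (e i)) := by
  rw [Fintype.linearIndependent_iff]
  intro c hc i
  simpa [hc] using (coeff_sum_smul_oddSingle he c i).symm

lemma span_oddSingle [Fintype ι] [NoZeroDivisors R] (hτ : Involutive τ)
    (he : IsFreeOrbitTransversal τ e) (h2 : (2 : R) ≠ 0) :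
    Submodule.span R (range fun i => oddSingle R τ (e i)) = oddSubmodule R τ := by
  refine le_antisymm (Submodule.span_le.mpr ?_) fun α hα => ?_
  · rintro _ ⟨i, rfl⟩
    exact oddSingle_mem_oddSubmodule hτ (e i)
  · have hsum : ∑ j, α.coeff (e j) • oddSingle R τ (e j) = α :=
      eq_of_coeff_eq_of_isFreeOrbitTransversal h2 he
        (Submodule.sum_mem _ fun j _ => Submodule.smul_mem _ _ (oddSingle_mem_oddSubmodule hτ _))
        hα (coeff_sum_smul_oddSingle he _)
    rw [← hsum]
    exact Submodule.sum_mem _ fun j _ => Submodule.smul_mem _ _ (Submodule.subset_span ⟨j, rfl⟩)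

noncomputable def oddBasis [Fintype ι] [NoZeroDivisors R] (hτ : Involutive τ)
    (he : IsFreeOrbitTransversal τ e) (h2 : (2 : R) ≠ 0) : Module.Basis ι R (oddSubmodule R τ) :=
  (Module.Basis.span (linearIndependent_oddSingle he)).map
    (LinearEquiv.ofEq _ _ (span_oddSingle hτ he h2))

lemma coe_oddBasis [Fintype ι] [NoZeroDivisors R] (hτ : Involutive τ)
    (he : IsFreeOrbitTransversal τ e) (h2 : (2 : R) ≠ 0) (i : ι) :
    (oddBasis hτ he h2 i : MonoidAlgebra R X) = oddSingle R τ (e i) := by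
  simp [oddBasis]

end MonoidAlgebra

namespace ZMod

def halfResidue (n : ℕ) (i : Fin ((n - 1) / 2)) : ZMod n := ((i + 1 : ℕ) : ZMod n)

lemma mem_range_halfResidue {n : ℕ} [NeZero n] {y : ZMod n} (hy0 : y.val ≠ 0)
    (hy : 2 * y.val < n) : y ∈ range (halfResidue n) :=
  ⟨⟨y.val - 1, by omega⟩, by simp [halfResidue, Nat.sub_add_cancel (Nat.pos_of_ne_zero hy0)]⟩

lemma isFreeOrbitTransversal_neg_halfResidue (n : ℕ) [NeZero n] :
    IsFreeOrbitTransversal (fun x : ZMod n => -x) (halfResidue n) := by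
  have hlt (i : Fin ((n - 1) / 2)) : (i : ℕ) + 1 < n := by omega
  refine ⟨fun i j hij => ?_, fun i j hij => ?_, fun x hx => ?_⟩
  · have := congrArg ZMod.val hij
    rw [halfResidue, halfResidue, val_cast_of_lt (hlt i), val_cast_of_lt (hlt j)] at this
    exact Fin.ext (by omega)
  · have hdvd : n ∣ (i + 1) + (j + 1) := by
      rw [← natCast_eq_zero_iff, Nat.cast_add, ← halfResidue, ← halfResidue, hij, neg_add_cancel]
    have := Nat.le_of_dvd (by omega) hdvd
    omega
  · have hx0 : x ≠ 0 := by rintro rfl; simp at hx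
    have hv0 : x.val ≠ 0 := (val_ne_zero x).mpr hx0
    have hv := val_lt x
    rcases lt_trichotomy (2 * x.val) n with h | h | h
    · exact .inl (mem_range_halfResidue hv0 h)
    · refine absurd ?_ hx
      rw [neg_eq_iff_add_eq_zero, ← natCast_zmod_val x, ← Nat.cast_add, natCast_eq_zero_iff]
      exact ⟨1, by omega⟩
    · have hneg : (-x).val = n - x.val := by rw [neg_val, if_neg hx0]
      exact .inr (mem_range_halfResidue (by omega) (by omega))

end ZMod

namespace DihedralGroup

open ZMod

variable {n : ℕ}

@[simp]
lemma sr_zero_mul_r_mul_inv (k : ZMod n) : sr 0 * r k * (sr 0)⁻¹ = r (-k) := by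
  simp [inv_sr]

@[simp]
lemma sr_zero_mul_sr_mul_inv (k : ZMod n) : sr 0 * sr k * (sr 0)⁻¹ = sr (-k) := by
  simp [inv_sr]

lemma involutive_conj_sr_zero : Involutive fun g : DihedralGroup n => sr 0 * g * (sr 0)⁻¹ := by
  rintro (k | k) <;> simp

def halfTransversal (n : ℕ) : Fin ((n - 1) / 2) ⊕ Fin ((n - 1) / 2) → DihedralGroup n :=
  Sum.elim (fun i => r (halfResidue n i)) (fun i => sr (-halfResidue n i))

lemma isFreeOrbitTransversal_halfTransversal [NeZero n] :
    IsFreeOrbitTransversal (fun g : DihedralGroup n => sr 0 * g * (sr 0)⁻¹)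
      (halfTransversal n) := by
  have hZ := isFreeOrbitTransversal_neg_halfResidue n
  refine ⟨Injective.sumElim ?_ ?_ (by simp), ?_, ?_⟩
  · exact fun i j h => hZ.injective (r.inj h)
  · exact fun i j h => hZ.injective (neg_injective (sr.inj h))
  · rintro (i | i) (j | j) <;> simp [halfTransversal, hZ.ne_apply i j, neg_eq_iff_eq_neg]
  · rintro (k | k) hk <;> simp only [sr_zero_mul_r_mul_inv, sr_zero_mul_sr_mul_inv, ne_eq, r.injEq,
      sr.injEq] at hk <;> obtain ⟨i, rfl⟩ | ⟨i, hi⟩ := hZ.mem_range_or k hk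
    · exact .inl ⟨.inl i, rfl⟩
    · exact .inr ⟨.inl i, by simp [halfTransversal, hi]⟩
    · exact .inr ⟨.inr i, by simp [halfTransversal]⟩
    · exact .inl ⟨.inr i, by simp [halfTransversal, hi]⟩

end DihedralGroup

lemma antiCentralizer_bD (F : Type*) [Field F] (n : ℕ) :
    antiCentralizer F (DihedralGroup n) (bD F n) =
      MonoidAlgebra.oddSubmodule F fun g => DihedralGroup.sr 0 * g * (DihedralGroup.sr 0)⁻¹ :=
  MonoidAlgebra.antiCentralizer_of_eq_oddSubmodule _

/-- For a field `F` of characteristic `0` or an odd prime, the set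
`{a^i - a^{-i}, (a^i - a^{-i}) b : 1 ≤ i ≤ ⌊(n-1)/2⌋}` is an `F`-basis of the
anti-centralizer `C̄(b)` in `F D_{2n}`. -/
theorem basis_antiCentralizer_b (F : Type*) [Field F] (n : ℕ) (hn : 3 ≤ n)
    (hchar : ringChar F = 0 ∨ (Nat.Prime (ringChar F) ∧ Odd (ringChar F))) :
    ∃ B : Module.Basis (Fin ((n - 1) / 2) ⊕ Fin ((n - 1) / 2)) F
        (antiCentralizer F (DihedralGroup n) (bD F n)),
      (∀ i : Fin ((n - 1) / 2),
          (B (Sum.inl i) : MonoidAlgebra F (DihedralGroup n)) =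
            aD F n ((i : ℤ) + 1) - aD F n (-((i : ℤ) + 1))) ∧
      (∀ i : Fin ((n - 1) / 2),
          (B (Sum.inr i) : MonoidAlgebra F (DihedralGroup n)) =
            (aD F n ((i : ℤ) + 1) - aD F n (-((i : ℤ) + 1))) * bD F n) := by
  have : NeZero n := ⟨by omega⟩
  have h2 : (2 : F) ≠ 0 := Ring.two_ne_zero <| by
    rcases hchar with h | ⟨-, h⟩
    · simp [h]
    · exact fun h' => Nat.not_odd_iff_even.mpr even_two (h' ▸ h)
  have hcast (i : Fin ((n - 1) / 2)) : (((i : ℤ) + 1 : ℤ) : ZMod n) = ZMod.halfResidue n i := by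
    simp [ZMod.halfResidue]
  refine ⟨(oddBasis DihedralGroup.involutive_conj_sr_zero
    DihedralGroup.isFreeOrbitTransversal_halfTransversal h2).map
      (LinearEquiv.ofEq _ _ (antiCentralizer_bD F n).symm), fun i => ?_, fun i => ?_⟩ <;>
  rw [Module.Basis.map_apply, LinearEquiv.coe_ofEq_apply, coe_oddBasis] <;>
  simp only [oddSingle, DihedralGroup.halfTransversal, aD, bD, of_apply, Int.cast_neg, hcast]
  · simp
  · simp [sub_mul, single_mul_single]
end

section
/- Let n ≥ 3 and let F be a field of characteristic 0 or of odd prime characteristic p. In the group algebra F D_{2n} of the dihedral group D_{2n} = ⟨a, b | aⁿ = b² = (ab)² = 1⟩, the set {aⁱ − a⁻ⁱ, a(aⁱ − a⁻ⁱ)b : i = 1, 2, ..., ⌊(n−1)/2⌋} is an F-basis of the anti-centralizer C̄(ab) = {α ∈ F D_{2n} : α(ab) = −(ab)α}. -/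
open MonoidAlgebra

/-!
An element `α` anticommutes with `ab` exactly when its coefficients satisfy
`α ((ab) x (ab)⁻¹) = -α x`. Conjugation by `ab` is an involution of `D_{2n}`; as `2 ≠ 0` in `F`,
such an `α` vanishes at its fixed points and is determined by its values at one point `x` of
each two-element orbit, so the elements `x - (ab) x (ab)⁻¹` form a basis. In terms of `ZMod n`,
the involution is `k ↦ -k` on rotations and on (shifted) reflections, whose two-element orbits
are the pairs `±(i + 1)` with `i < (n - 1) / 2`.
-/

section AntiInvariants

def antiInvariants (F : Type*) [Field F] {X : Type*} (σ : X → X) :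
    Submodule F (MonoidAlgebra F X) where
  carrier := {α | ∀ x, α.coeff (σ x) = -α.coeff x}
  add_mem' {α β} hα hβ x := by simp [hα x, hβ x, add_comm]
  zero_mem' x := by simp
  smul_mem' c α hα x := by simp [hα x]

variable {F X : Type*} [Field F] {σ : X → X}

theorem mem_antiInvariants {α : MonoidAlgebra F X} :
    α ∈ antiInvariants F σ ↔ ∀ x, α.coeff (σ x) = -α.coeff x :=
  Iff.rfl

theorem coeff_eq_zero_of_mem_antiInvariants (h2 : (2 : F) ≠ 0) {α : MonoidAlgebra F X}
    (hα : α ∈ antiInvariants F σ) {x : X} (hx : σ x = x) : α.coeff x = 0 := by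
  have h := hα x
  rw [hx] at h
  have h2α : 2 * α.coeff x = 0 := by linear_combination h
  exact (mul_eq_zero.mp h2α).resolve_left h2

theorem single_sub_single_mem_antiInvariants (hσ : Function.Involutive σ) (x : X) :
    single x (1 : F) - single (σ x) 1 ∈ antiInvariants F σ := by
  intro y
  classical
  simp [Finsupp.single_apply, hσ.eq_iff, hσ _]

variable {ι : Type*} {s : ι → X}

theorem eq_zero_of_mem_antiInvariants (h2 : (2 : F) ≠ 0)
    (hcover : ∀ x, σ x ≠ x → ∃ i, x = s i ∨ x = σ (s i)) {α : MonoidAlgebra F X}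
    (hα : α ∈ antiInvariants F σ) (h : ∀ i, α.coeff (s i) = 0) : α = 0 := by
  ext x
  by_cases hx : σ x = x
  · exact coeff_eq_zero_of_mem_antiInvariants h2 hα hx
  obtain ⟨i, rfl | rfl⟩ := hcover x hx
  · exact h i
  · simp [hα (s i), h i]

variable [Fintype ι]

theorem coeff_sum_smul_single_sub_single (hs : Function.Injective s)
    (hsσ : ∀ i j, s i ≠ σ (s j)) (c : ι → F) (j : ι) :
    (∑ i, c i • (single (s i) (1 : F) - single (σ (s i)) 1)).coeff (s j) = c j := by
  classical
  simp [coeff_sum, Finsupp.finsetSum_apply, Finsupp.single_apply, hs.eq_iff, hsσ j]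

theorem exists_basis_antiInvariants (h2 : (2 : F) ≠ 0) (hσ : Function.Involutive σ)
    (hs : Function.Injective s) (hsσ : ∀ i j, s i ≠ σ (s j))
    (hcover : ∀ x, σ x ≠ x → ∃ i, x = s i ∨ x = σ (s i)) :
    ∃ B : Module.Basis ι F (antiInvariants F σ),
      ∀ i, (B i : MonoidAlgebra F X) = single (s i) 1 - single (σ (s i)) 1 := by
  set v : ι → MonoidAlgebra F X := fun i ↦ single (s i) 1 - single (σ (s i)) 1
  have hli : LinearIndependent F v := Fintype.linearIndependent_iff.2 fun c hc j ↦ by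
    rw [← coeff_sum_smul_single_sub_single hs hsσ c j, hc, coeff_zero, Finsupp.zero_apply]
  have hspan : Submodule.span F (Set.range v) = antiInvariants F σ := by
    have hle : Submodule.span F (Set.range v) ≤ antiInvariants F σ :=
      Submodule.span_le.2 <| Set.range_subset_iff.2 fun i ↦
        single_sub_single_mem_antiInvariants hσ (s i)
    refine le_antisymm hle fun α hα ↦ ?_
    have hsum : ∑ i, α.coeff (s i) • v i ∈ Submodule.span F (Set.range v) :=
      Submodule.sum_mem _ fun i _ ↦ Submodule.smul_mem _ _ (Submodule.subset_span ⟨i, rfl⟩)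
    suffices α - ∑ i, α.coeff (s i) • v i = 0 by rwa [sub_eq_zero.1 this]
    refine eq_zero_of_mem_antiInvariants h2 hcover
      (sub_mem hα (hle hsum)) fun j ↦ ?_
    rw [coeff_sub, Finsupp.sub_apply, coeff_sum_smul_single_sub_single hs hsσ, sub_self]
  exact ⟨(Module.Basis.span hli).map (LinearEquiv.ofEq _ _ hspan), fun i ↦ by
    simp [Module.Basis.span_apply, v]⟩

end AntiInvariants

theorem antiCentralizer_of_eq_antiInvariants {F G : Type*} [Field F] [Group G] (g : G) :
    antiCentralizer F G (of F G g) = antiInvariants F (fun x ↦ g * x * g⁻¹) := by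
  ext α
  rw [mem_antiInvariants, show α ∈ antiCentralizer F G (of F G g) ↔
    α * of F G g = -(of F G g * α) from Iff.rfl, ← coeff_inj, Finsupp.ext_iff]
  simp only [of_apply, coeff_mul_single_apply, mul_one, coeff_neg, Finsupp.coe_neg, Pi.neg_apply,
    coeff_single_mul_apply, one_mul]
  exact ⟨fun h x ↦ by simpa [mul_assoc] using h (g * x),
    fun h y ↦ by simpa [mul_assoc] using h (g⁻¹ * y)⟩

namespace ZMod

variable {n i j : ℕ}

theorem natCast_add_one_inj (hi : i < (n - 1) / 2) (hj : j < (n - 1) / 2) :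
    (i + 1 : ZMod n) = j + 1 ↔ i = j := by
  rw [add_left_inj, natCast_eq_natCast_iff', Nat.mod_eq_of_lt (by omega),
    Nat.mod_eq_of_lt (by omega)]

theorem natCast_add_one_ne_neg (hi : i < (n - 1) / 2) (hj : j < (n - 1) / 2) :
    (i + 1 : ZMod n) ≠ -(j + 1) := by
  intro h
  have hdvd : n ∣ i + j + 2 := by
    rw [← natCast_eq_zero_iff]
    push_cast
    linear_combination h
  have := Nat.le_of_dvd (by omega) hdvd
  omega

theorem exists_eq_natCast_add_one_or_neg [NeZero n] {k : ZMod n} (hk : -k ≠ k) :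
    ∃ j < (n - 1) / 2, k = j + 1 ∨ k = -(j + 1) := by
  have ha0 : k.valMinAbs.natAbs ≠ 0 := by
    contrapose! hk
    simp_all
  have hak : (k.valMinAbs.natAbs : ZMod n) = k ∨ (k.valMinAbs.natAbs : ZMod n) = -k := by
    rw [natCast_natAbs_valMinAbs]
    split_ifs <;> simp
  have hle := natAbs_valMinAbs_le k
  generalize k.valMinAbs.natAbs = a at ha0 hak hle
  have ha2 : 2 * a ≠ n := by
    intro h2
    have h2a : (a : ZMod n) + a = 0 := by
      rw [← Nat.cast_add, ← two_mul, h2, natCast_self]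
    apply hk
    rcases hak with h | h
    · linear_combination -h2a + 2 * h
    · linear_combination h2a - 2 * h
  obtain ⟨j, rfl⟩ := Nat.exists_eq_add_one_of_ne_zero ha0
  refine ⟨j, by omega, ?_⟩
  push_cast at hak
  rcases hak with h | h
  · exact Or.inl h.symm
  · exact Or.inr (by linear_combination h)

end ZMod

namespace DihedralGroup

variable {n : ℕ}

theorem conj_sr_r (i k : ZMod n) : sr i * r k * (sr i)⁻¹ = r (-k) := by
  simp [inv_sr, sr_mul_r, sr_mul_sr]

theorem conj_sr_sr (i k : ZMod n) : sr i * sr k * (sr i)⁻¹ = sr (2 * i - k) := by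
  simp only [inv_sr, sr_mul_sr, r_mul_sr]
  ring_nf

/-- One point of each two-element orbit of conjugation by `ab = sr (-1)`, which acts by
`r k ↦ r (-k)` and `sr (k - 1) ↦ sr (-k - 1)`. The reflections are chosen so that
`x - (ab) x (ab)⁻¹` is `a (a ^ (i + 1) - a ^ (-(i + 1))) b`. -/
def orbitRep (n : ℕ) : Fin ((n - 1) / 2) ⊕ Fin ((n - 1) / 2) → DihedralGroup n :=
  Sum.elim (fun i ↦ r ((i : ℕ) + 1)) (fun i ↦ sr (-((i : ℕ) + 1) - 1))

theorem orbitRep_injective : Function.Injective (orbitRep n) := by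
  rintro (i | i) (j | j) h <;>
    simp only [orbitRep, Sum.elim_inl, Sum.elim_inr, r.injEq, sr.injEq, reduceCtorEq] at h
  · exact congrArg _ (Fin.ext ((ZMod.natCast_add_one_inj i.2 j.2).1 h))
  · exact congrArg _ <| Fin.ext <| (ZMod.natCast_add_one_inj i.2 j.2).1 (by linear_combination -h)

theorem orbitRep_ne_conj (i j) : orbitRep n i ≠ sr (-1) * orbitRep n j * (sr (-1))⁻¹ := by
  rcases i with i | i <;> rcases j with j | j <;>
    simp only [orbitRep, Sum.elim_inl, Sum.elim_inr, conj_sr_r, conj_sr_sr, ne_eq, r.injEq,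
      sr.injEq, reduceCtorEq, not_false_eq_true] <;> intro h
  · exact ZMod.natCast_add_one_ne_neg i.2 j.2 h
  · exact ZMod.natCast_add_one_ne_neg j.2 i.2 (by linear_combination -h)

theorem exists_orbitRep [NeZero n] {x : DihedralGroup n} (hx : sr (-1) * x * (sr (-1))⁻¹ ≠ x) :
    ∃ i, x = orbitRep n i ∨ x = sr (-1) * orbitRep n i * (sr (-1))⁻¹ := by
  rcases x with k | k <;> simp only [conj_sr_r, conj_sr_sr, ne_eq, r.injEq, sr.injEq] at hx
  · obtain ⟨j, hj, hk | hk⟩ := ZMod.exists_eq_natCast_add_one_or_neg hx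
    · exact ⟨.inl ⟨j, hj⟩, .inl (by rw [hk]; rfl)⟩
    · exact ⟨.inl ⟨j, hj⟩, .inr (by rw [hk, orbitRep, Sum.elim_inl, conj_sr_r])⟩
  · obtain ⟨j, hj, hk | hk⟩ := ZMod.exists_eq_natCast_add_one_or_neg (k := k + 1)
      (fun h ↦ hx (by linear_combination h))
    · refine ⟨.inr ⟨j, hj⟩, .inr ?_⟩
      simp only [orbitRep, Sum.elim_inr, conj_sr_sr, sr.injEq]
      linear_combination hk
    · refine ⟨.inr ⟨j, hj⟩, .inl ?_⟩
      simp only [orbitRep, Sum.elim_inr, sr.injEq]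
      linear_combination hk

end DihedralGroup

open DihedralGroup in
/-- For a field `F` of characteristic `0` or an odd prime, the set
`{a^i - a^{-i}, a (a^i - a^{-i}) b : 1 ≤ i ≤ ⌊(n-1)/2⌋}` is an `F`-basis of the
anti-centralizer `C̄(ab)` in `F D_{2n}`. -/
theorem basis_antiCentralizer_ab (F : Type*) [Field F] (n : ℕ) (hn : 3 ≤ n)
    (hchar : ringChar F = 0 ∨ (Nat.Prime (ringChar F) ∧ Odd (ringChar F))) :
    ∃ B : Module.Basis (Fin ((n - 1) / 2) ⊕ Fin ((n - 1) / 2)) F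
        (antiCentralizer F (DihedralGroup n) (aD F n 1 * bD F n)),
      (∀ i : Fin ((n - 1) / 2),
          (B (Sum.inl i) : MonoidAlgebra F (DihedralGroup n)) =
            aD F n ((i : ℤ) + 1) - aD F n (-((i : ℤ) + 1))) ∧
      (∀ i : Fin ((n - 1) / 2),
          (B (Sum.inr i) : MonoidAlgebra F (DihedralGroup n)) =
            aD F n 1 * (aD F n ((i : ℤ) + 1) - aD F n (-((i : ℤ) + 1))) * bD F n) := by
  have : NeZero n := ⟨by omega⟩
  have h2 : (2 : F) ≠ 0 := Ring.two_ne_zero <| by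
    rcases hchar with h | ⟨-, h⟩
    · omega
    · exact fun h2 ↦ by rw [h2] at h; exact Nat.not_odd_iff_even.2 even_two h
  have hab : aD F n 1 * bD F n = of F _ (sr (-1)) := by
    simp [aD, bD, r_mul_sr]
  have hσ : Function.Involutive fun x : DihedralGroup n ↦ sr (-1) * x * (sr (-1))⁻¹ := by
    rintro (k | k) <;> simp only [conj_sr_r, conj_sr_sr, neg_neg, sub_sub_cancel]
  obtain ⟨B, hB⟩ := exists_basis_antiInvariants h2 hσ orbitRep_injective orbitRep_ne_conj
    fun _ ↦ exists_orbitRep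
  rw [hab, antiCentralizer_of_eq_antiInvariants]
  refine ⟨B, fun i ↦ ?_, fun i ↦ ?_⟩ <;> rw [hB]
  · simp only [orbitRep, Sum.elim_inl, conj_sr_r, aD, of_apply]
    push_cast
    rfl
  · simp only [orbitRep, Sum.elim_inr, conj_sr_sr, aD, bD, of_apply, mul_sub, sub_mul,
      single_mul_single, r_mul_r, r_mul_sr, mul_one]
    push_cast
    congr 3 <;> ring
end

section
/- Let n ≥ 3 and let F be a field that is an algebraic extension of its prime field, of characteristic 0 or of odd prime characteristic p with p ∤ n. Then every derivation of the dihedral group algebra F D_{2n} is inner: for every additive map d : F D_{2n} → F D_{2n} satisfying d(xy) = d(x)y + x d(y) for all x, y, there exists β ∈ F D_{2n} such that d(α) = αβ − βα for all α ∈ F D_{2n}. -/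
/-!
Restricted to the scalars, an additive derivation `d` of an `F`-algebra is a derivation of `F`
that kills the prime field. The prime field is perfect, so `F`, being algebraic over it, is
separable and hence formally unramified over it; thus `d` kills `F` and is `F`-linear.
For an `F`-linear derivation of `F[G]` with `|G|` invertible in `F`, the average
`β = -|G|⁻¹ ∑ₕ d(h) h⁻¹` satisfies `d(g) = gβ - βg` for every `g ∈ G` (first cohomology of a
finite group with `|G|` invertible vanishes). For `D_{2n}` we have `|G| = 2n`, which the
characteristic hypothesis makes invertible.
-/

open MonoidAlgebra

theorem Derivation.eq_zero_of_formallyUnramified {R S M : Type*} [CommRing R] [CommRing S]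
    [Algebra R S] [Algebra.FormallyUnramified R S] [AddCommGroup M] [Module S M] [Module R M]
    [IsScalarTower R S M] (D : Derivation R S M) : D = 0 := by
  ext x
  rw [← D.liftKaehlerDifferential_comp_D x, Subsingleton.elim (KaehlerDifferential.D R S x) 0,
    map_zero, Derivation.zero_apply]

instance Subfield.perfectField_bot (F : Type*) [Field F] : PerfectField (⊥ : Subfield F) := by
  obtain ⟨p, _⟩ := CharP.exists F
  rcases CharP.char_is_prime_or_zero F p with hp | rfl
  · have : Fact p.Prime := ⟨hp⟩
    have := Subfield.fintypeBot F p
    infer_instance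
  · have := CharP.charP_to_charZero F
    infer_instance

namespace AddMonoidHom

variable {F A : Type*} [Field F] [Ring A] [Algebra F A]

theorem map_one_eq_zero_of_leibniz {d : A →+ A} (hd : ∀ x y, d (x * y) = d x * y + x * d y) :
    d 1 = 0 := by
  simpa using hd 1 1

theorem map_algebraMap_mul_of_leibniz {d : A →+ A} (hd : ∀ x y, d (x * y) = d x * y + x * d y)
    (a b : F) :
    d (algebraMap F A (a * b)) = a • d (algebraMap F A b) + b • d (algebraMap F A a) := by
  rw [map_mul, hd, ← Algebra.smul_def, ← Algebra.commutes, ← Algebra.smul_def, add_comm]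

def scalarConstants (d : A →+ A) (hd : ∀ x y, d (x * y) = d x * y + x * d y) : Subfield F where
  carrier := {c | d (algebraMap F A c) = 0}
  zero_mem' := by simp
  one_mem' := by simp [map_one_eq_zero_of_leibniz hd]
  add_mem' {a b} ha hb := by simp_all
  neg_mem' {a} ha := by simp_all
  mul_mem' {a b} ha hb := by
    simp_all only [Set.mem_ofPred_eq, map_algebraMap_mul_of_leibniz hd, smul_zero, add_zero]
  inv_mem' a ha := by
    rcases eq_or_ne a 0 with rfl | ha0
    · simp
    have h := map_algebraMap_mul_of_leibniz hd a a⁻¹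
    rw [mul_inv_cancel₀ ha0, map_one, map_one_eq_zero_of_leibniz hd, Set.mem_ofPred_eq.mp ha,
      smul_zero, add_zero, eq_comm, smul_eq_zero] at h
    exact h.resolve_left ha0

/-- Linearity over the prime field holds because the prime field lies in `scalarConstants d hd`. -/
def toDerivationBot (d : A →+ A) (hd : ∀ x y, d (x * y) = d x * y + x * d y) :
    Derivation (⊥ : Subfield F) F A :=
  Derivation.mk'
    { toFun := fun c => d (algebraMap F A c)
      map_add' := fun a b => by simp
      map_smul' := fun r c => by
        have hr : d (algebraMap F A r) = 0 := bot_le (a := scalarConstants d hd) r.2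
        rw [Subfield.smul_def, smul_eq_mul, map_algebraMap_mul_of_leibniz hd, hr, smul_zero,
          add_zero, RingHom.id_apply, Subfield.smul_def] }
    (map_algebraMap_mul_of_leibniz hd)

theorem map_algebraMap_eq_zero_of_leibniz [Algebra.IsSeparable (⊥ : Subfield F) F] {d : A →+ A}
    (hd : ∀ x y, d (x * y) = d x * y + x * d y) (c : F) : d (algebraMap F A c) = 0 :=
  haveI := Algebra.FormallyUnramified.of_isSeparable (⊥ : Subfield F) F
  congr($((toDerivationBot d hd).eq_zero_of_formallyUnramified) c)

theorem map_smul_of_leibniz [Algebra.IsSeparable (⊥ : Subfield F) F] {d : A →+ A}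
    (hd : ∀ x y, d (x * y) = d x * y + x * d y) (c : F) (x : A) : d (c • x) = c • d x := by
  rw [Algebra.smul_def, hd, map_algebraMap_eq_zero_of_leibniz hd, zero_mul, zero_add,
    Algebra.smul_def]

end AddMonoidHom

theorem card_smul_eq_sum_mul_sub_mul_sum {G A : Type*} [Group G] [Fintype G] [Ring A]
    (φ : G →* A) (δ : G → A) (hδ : ∀ g h, δ (g * h) = δ g * φ h + φ g * δ h) (g : G) :
    Fintype.card G • δ g = (∑ h, δ h * φ h⁻¹) * φ g - φ g * ∑ h, δ h * φ h⁻¹ := by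
  set S := ∑ h, δ h * φ h⁻¹
  have hφ : ∀ h, φ h * φ h⁻¹ = 1 := fun h => by rw [← map_mul, mul_inv_cancel, map_one]
  have hφ' : ∀ h, φ h⁻¹ * φ h = 1 := fun h => by rw [← map_mul, inv_mul_cancel, map_one]
  have hterm : ∀ h, δ (g * h) * φ (g * h)⁻¹ = δ g * φ g⁻¹ + φ g * (δ h * φ h⁻¹) * φ g⁻¹ := by
    intro h
    rw [hδ, mul_inv_rev, map_mul, add_mul, mul_assoc (δ g), ← mul_assoc (φ h), hφ, one_mul]
    simp only [mul_assoc]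
  have hS : S = Fintype.card G • (δ g * φ g⁻¹) + φ g * S * φ g⁻¹ :=
    calc S = ∑ h, δ (g * h) * φ (g * h)⁻¹ :=
          (Fintype.sum_equiv (Equiv.mulLeft g) _ _ fun _ => rfl).symm
      _ = _ := by
        simp only [hterm, Finset.sum_add_distrib, Finset.sum_const, Finset.card_univ,
          ← Finset.mul_sum, ← Finset.sum_mul, S]
  calc Fintype.card G • δ g = (Fintype.card G • (δ g * φ g⁻¹)) * φ g := by
        rw [smul_mul_assoc, mul_assoc, hφ', mul_one]
    _ = S * φ g - φ g * S := by
        rw [eq_sub_iff_add_eq]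
        conv_rhs => rw [hS]
        rw [add_mul, mul_assoc (φ g * S), hφ', mul_one]

theorem MonoidAlgebra.exists_eq_mul_sub_mul_of_isUnit_card {k G : Type*} [CommRing k] [Group G]
    [Fintype G] (hG : IsUnit (Fintype.card G : k)) (d : k[G] →ₗ[k] k[G])
    (hd : ∀ x y, d (x * y) = d x * y + x * d y) :
    ∃ β, ∀ α, d α = α * β - β * α := by
  obtain ⟨u, hu⟩ := hG.exists_left_inv
  set S := ∑ h, d (of k G h) * of k G h⁻¹
  refine ⟨-(u • S), fun α => ?_⟩
  induction α using MonoidAlgebra.induction_on with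
  | of g =>
    have hcard := card_smul_eq_sum_mul_sub_mul_sum (of k G) (fun g => d (of k G g))
      (fun g h => by rw [map_mul, hd]) g
    calc d (of k G g) = u • (Fintype.card G • d (of k G g)) := by
          rw [← Nat.cast_smul_eq_nsmul k, smul_smul, hu, one_smul]
      _ = _ := by
          rw [hcard, smul_sub, mul_neg, neg_mul, sub_neg_eq_add, mul_smul_comm, smul_mul_assoc]
          abel
  | add x y hx hy => rw [map_add, hx, hy, add_mul, mul_add]; abel
  | smul r x hx => rw [map_smul, hx, smul_sub, smul_mul_assoc, mul_smul_comm]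

/-- If `F` is an algebraic extension of its prime field (the bottom subfield of `F`)
of characteristic `0` or of odd prime characteristic `p` with `p ∤ n`, then every
derivation of the dihedral group algebra `F D_{2n}` is inner. -/
theorem derivations_dihedral_inner (F : Type*) [Field F]
    [Algebra.IsAlgebraic (⊥ : Subfield F) F] (n : ℕ) (hn : 3 ≤ n)
    (hchar : ringChar F = 0 ∨
      (Nat.Prime (ringChar F) ∧ Odd (ringChar F) ∧ ¬ ringChar F ∣ n))
    (d : MonoidAlgebra F (DihedralGroup n) →+ MonoidAlgebra F (DihedralGroup n))
    (hd : ∀ x y : MonoidAlgebra F (DihedralGroup n), d (x * y) = d x * y + x * d y) :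
    ∃ β : MonoidAlgebra F (DihedralGroup n),
      ∀ α : MonoidAlgebra F (DihedralGroup n), d α = α * β - β * α := by
  have : NeZero n := ⟨by omega⟩
  have hcard : ((2 * n : ℕ) : F) ≠ 0 := by
    rw [Ne, ringChar.spec]
    rcases hchar with h0 | ⟨hp, hodd, hpn⟩
    · rw [h0, zero_dvd_iff]
      omega
    · intro h
      rcases hp.dvd_mul.mp h with h2 | h
      · rw [(Nat.prime_dvd_prime_iff_eq hp Nat.prime_two).mp h2] at hodd
        exact Nat.not_odd_iff_even.mpr even_two hodd
      · exact hpn h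
  let dF : MonoidAlgebra F (DihedralGroup n) →ₗ[F] MonoidAlgebra F (DihedralGroup n) :=
    { d with map_smul' := d.map_smul_of_leibniz hd }
  exact exists_eq_mul_sub_mul_of_isUnit_card (by rwa [DihedralGroup.card, isUnit_iff_ne_zero])
    dF hd
end

section
/- Let n ≥ 3 and let F be a field that is an algebraic extension of its prime field, of odd prime characteristic p with p ∣ n. Then the dihedral group algebra F D_{2n} has a non-zero outer derivation: there exists an additive map d : F D_{2n} → F D_{2n} satisfying d(xy) = d(x)y + x d(y) for all x, y, such that for every β ∈ F D_{2n} there is some α with d(α) ≠ αβ − βα. -/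
/-!
Since `p ∣ n`, the Euler operator `r ∂/∂r`, i.e. `rⁱ ↦ i • rⁱ` for `i : ZMod n`, is a well-defined
derivation of `F[⟨r⟩]`. Multiplying it by `z = r - r⁻¹`, which commutes with `r` and satisfies
`s z = -z s`, gives a derivation `d` of `F D_{2n}` with `d(g) = i • g z` for `g = rⁱ, s rⁱ`;
on group elements this is the cocycle identity `d(gh) = d(g) h + g d(h)`.
It is outer: `d(r) = r² - 1` has coefficient `1` at `r²` (as `n ≥ 3`), while every commutator
`r β - β r` has coefficient `β(r) - β(r) = 0` there.
-/

open MonoidAlgebra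

namespace MonoidAlgebra

variable {k G : Type*}

section LinearCombination

variable [CommSemiring k] [Monoid G] (φ : G → k[G])

noncomputable def linearCombination : k[G] →ₗ[k] k[G] :=
  Finsupp.linearCombination k φ ∘ₗ (coeffLinearEquiv k).toLinearMap

@[simp]
theorem linearCombination_single (g : G) (c : k) :
    linearCombination φ (single g c) = c • φ g := by
  simp [linearCombination, coeffLinearEquiv, coeff_single]

@[simp]
theorem linearCombination_of (g : G) : linearCombination φ (of k G g) = φ g := by
  simp [of_apply]

theorem linearCombination_mul (hφ : ∀ g h, φ (g * h) = φ g * of k G h + of k G g * φ h)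
    (x y : k[G]) :
    linearCombination φ (x * y) = linearCombination φ x * y + x * linearCombination φ y := by
  induction x using MonoidAlgebra.induction_linear with
  | zero => simp
  | add x x' hx hx' => simp only [add_mul, map_add, hx, hx']; abel
  | single g a =>
    induction y using MonoidAlgebra.induction_linear with
    | zero => simp
    | add y y' hy hy' => simp only [mul_add, map_add, hy, hy']; abel
    | single h b =>
      simp only [← smul_of, ← map_mul, map_smul, linearCombination_of, hφ, smul_add,
        smul_mul_assoc, mul_smul_comm, smul_smul, mul_comm b]

end LinearCombination

theorem coeff_commutator_mul_self [Ring k] [Monoid G] [IsCancelMul G] (g : G) (β : k[G]) :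
    (of k G g * β - β * of k G g).coeff (g * g) = 0 := by
  rw [coeff_sub, Finsupp.sub_apply, of_apply, coeff_single_mul_mul, coeff_mul_single_mul,
    one_mul, mul_one, sub_self]

end MonoidAlgebra

namespace DihedralGroup

variable {n : ℕ}

def idx : DihedralGroup n → ZMod n
  | r i => i
  | sr i => i

@[simp] theorem idx_r (i : ZMod n) : idx (r i) = i := rfl
@[simp] theorem idx_sr (i : ZMod n) : idx (sr i) = i := rfl

variable {k : Type*} [CommRing k] (χ : ZMod n →+ k)

noncomputable def eulerCocycle (g : DihedralGroup n) : k[DihedralGroup n] :=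
  χ (idx g) • (of k _ g * (of k _ (r 1) - of k _ (r (-1))))

theorem eulerCocycle_mul (g h : DihedralGroup n) :
    eulerCocycle χ (g * h) =
      eulerCocycle χ g * of k _ h + of k _ g * eulerCocycle χ h := by
  obtain (i | i) := g <;> obtain (j | j) := h <;>
    · simp only [eulerCocycle, idx_r, idx_sr, ← map_mul, mul_sub, sub_mul, smul_sub,
        smul_mul_assoc, mul_smul_comm, r_mul_r, r_mul_sr, sr_mul_r, sr_mul_sr, map_add, map_sub,
        add_smul, sub_smul]
      ring_nf
      abel

theorem r_two_ne_one (hn : 3 ≤ n) : (r 2 : DihedralGroup n) ≠ 1 := by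
  rw [Ne, ← r_zero, r.injEq, ← Nat.cast_ofNat, ZMod.natCast_eq_zero_iff]
  exact Nat.not_dvd_of_pos_of_lt two_pos hn

theorem coeff_eulerCocycle_r_one (hn : 3 ≤ n) :
    (eulerCocycle χ (r 1)).coeff (r 1 * r 1) = χ 1 := by
  simp [eulerCocycle, mul_sub, of_apply, one_add_one_eq_two, (r_two_ne_one hn).symm]

end DihedralGroup

open DihedralGroup in
theorem exists_outer_derivation_dihedral_general (F : Type*) [Field F]
    (n : ℕ) (hn : 3 ≤ n)
    (hchar : Nat.Prime (ringChar F) ∧ Odd (ringChar F) ∧ ringChar F ∣ n) :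
    ∃ d : MonoidAlgebra F (DihedralGroup n) →+ MonoidAlgebra F (DihedralGroup n),
      (∀ x y : MonoidAlgebra F (DihedralGroup n), d (x * y) = d x * y + x * d y) ∧
      ∀ β : MonoidAlgebra F (DihedralGroup n),
        ∃ α : MonoidAlgebra F (DihedralGroup n), d α ≠ α * β - β * α := by
  have : CharP F (ringChar F) := ringChar.charP F
  let χ := ZMod.castHom hchar.2.2 F
  let d := linearCombination (eulerCocycle χ.toAddMonoidHom)
  refine ⟨d.toAddMonoidHom, linearCombination_mul _ (eulerCocycle_mul _), fun β => ?_⟩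
  refine ⟨of F _ (r 1), fun hinner => ?_⟩
  have hcoeff := congrArg (·.coeff (r 1 * r 1)) hinner
  simp only [LinearMap.toAddMonoidHom_coe, d, linearCombination_of, coeff_eulerCocycle_r_one _ hn,
    coeff_commutator_mul_self] at hcoeff
  exact one_ne_zero (χ.map_one.symm.trans hcoeff)

/-- If `F` is an algebraic extension of its prime field (the bottom subfield of `F`)
of odd prime characteristic `p` with `p ∣ n`, then the dihedral group algebra
`F D_{2n}` has a non-zero outer derivation. -/
theorem exists_outer_derivation_dihedral (F : Type*) [Field F]
    [Algebra.IsAlgebraic (⊥ : Subfield F) F] (n : ℕ) (hn : 3 ≤ n)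
    (hchar : Nat.Prime (ringChar F) ∧ Odd (ringChar F) ∧ ringChar F ∣ n) :
    ∃ d : MonoidAlgebra F (DihedralGroup n) →+ MonoidAlgebra F (DihedralGroup n),
      (∀ x y : MonoidAlgebra F (DihedralGroup n), d (x * y) = d x * y + x * d y) ∧
      ∀ β : MonoidAlgebra F (DihedralGroup n),
        ∃ α : MonoidAlgebra F (DihedralGroup n), d α ≠ α * β - β * α :=
  exists_outer_derivation_dihedral_general F n hn hchar
end

section
/- Let n ≥ 2 and let F be a field of characteristic 0 or of odd prime characteristic p. In the group algebra F T_{4n} of the dicyclic group T_{4n} = ⟨a, b | a^{2n} = 1, b² = aⁿ, b⁻¹ab = a⁻¹⟩, the set {aⁱ − a⁻ⁱ, (aⁱ − a⁻ⁱ)b : i = 1, 2, ..., n−1} is an F-basis of the anti-centralizer C̄(b) = {α ∈ F T_{4n} : αb = −bα}. -/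
open MonoidAlgebra

/-- `aQ F n i` is the image of `a^i` (with `a = QuaternionGroup.a 1`) in the
dicyclic group algebra `F T_{4n}`. -/
noncomputable def aQ (F : Type*) [Field F] (n : ℕ) (i : ℤ) :
    MonoidAlgebra F (QuaternionGroup n) :=
  MonoidAlgebra.of F (QuaternionGroup n) (QuaternionGroup.a (i : ZMod (2 * n)))

/-- `bQ F n` is the image of `b = QuaternionGroup.xa 0` in the dicyclic group
algebra `F T_{4n}`. -/
noncomputable def bQ (F : Type*) [Field F] (n : ℕ) :
    MonoidAlgebra F (QuaternionGroup n) :=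
  MonoidAlgebra.of F (QuaternionGroup n) (QuaternionGroup.xa 0)

/-!
Conjugation by `b` permutes `T_{4n}`, and `α b = -b α` says exactly that the coefficients of `α`
change sign under this permutation. Since `b²` is central, it is an involution; as `2 ≠ 0`, the
coefficients at its fixed points vanish, and each two-element orbit `{x, b x b⁻¹}` contributes
the basis vector `x - b x b⁻¹`. In `T_{4n}` conjugation by `b` sends `a^i ↦ a^{-i}` and
`a^i b ↦ a^{-i} b`, so the two-element orbits are represented by `a^i` and `a^i b`,
`1 ≤ i ≤ n - 1`.
-/

section AntiCentralizer

variable {k G : Type*} [Field k] [Group G]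

theorem mem_antiCentralizer_of_iff {g : G} {α : MonoidAlgebra k G} :
    α ∈ antiCentralizer k G (of k G g) ↔ ∀ h, α.coeff (MulAut.conj g h) = -α.coeff h := by
  change α * of k G g = -(of k G g * α) ↔ _
  constructor
  · intro hα h
    simpa [mul_assoc] using congr_arg (fun x => x.coeff (g * h)) hα
  · intro hα
    ext x
    simpa [mul_assoc] using hα (g⁻¹ * x)

theorem coeff_eq_zero_of_mem_antiCentralizer_of {g : G} {α : MonoidAlgebra k G}
    (h2 : (2 : k) ≠ 0) (hα : α ∈ antiCentralizer k G (of k G g)) {x : G}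
    (hx : MulAut.conj g x = x) :
    α.coeff x = 0 := by
  have hneg := mem_antiCentralizer_of_iff.1 hα x
  rw [hx] at hneg
  have : (2 : k) * α.coeff x = 0 := by linear_combination hneg
  exact (mul_eq_zero.1 this).resolve_left h2

theorem of_sub_of_conj_mem_antiCentralizer {g : G} (hg : g ^ 2 ∈ Subgroup.center G) (x : G) :
    of k G x - of k G (MulAut.conj g x) ∈ antiCentralizer k G (of k G g) := by
  have hgx : g * (g * x * g⁻¹) = x * g := by
    rw [← mul_assoc, ← mul_assoc, ← sq, (Subgroup.mem_center_iff.1 hg x).symm]; group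
  change _ * _ = -(_ * _)
  simp only [MulAut.conj_apply, sub_mul, mul_sub, ← map_mul, hgx, inv_mul_cancel_right, neg_sub]

variable {ι : Type*} [Fintype ι] {g : G} {t : ι → G}

theorem coeff_sum_smul_of_sub_of_conj_apply (ht : Function.Injective t)
    (hdisj : ∀ i j, MulAut.conj g (t i) ≠ t j) (c : ι → k) (j : ι) :
    (∑ i, c i • (of k G (t i) - of k G (MulAut.conj g (t i)))).coeff (t j) = c j := by
  classical
  simp [coeff_sum, Finsupp.single_apply, ht.eq_iff, hdisj, -MulAut.conj_apply]

theorem coeff_sum_smul_of_sub_of_conj_apply_conj (ht : Function.Injective t)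
    (hdisj : ∀ i j, MulAut.conj g (t i) ≠ t j) (c : ι → k) (j : ι) :
    (∑ i, c i • (of k G (t i) - of k G (MulAut.conj g (t i)))).coeff (MulAut.conj g (t j)) =
      -c j := by
  classical
  simp [coeff_sum, Finsupp.single_apply, ht.eq_iff, (hdisj _ _).symm, -MulAut.conj_apply]

theorem coeff_sum_smul_of_sub_of_conj_apply_of_conj_eq (c : ι → k) {x : G}
    (hx : MulAut.conj g x = x) :
    (∑ i, c i • (of k G (t i) - of k G (MulAut.conj g (t i)))).coeff x = 0 := by
  classical
  have hconj : ∀ y, MulAut.conj g y = x ↔ y = x := fun y => by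
    conv_lhs => rw [← hx]
    exact (MulAut.conj g).injective.eq_iff
  simp [coeff_sum, Finsupp.single_apply, hconj, -MulAut.conj_apply]

theorem linearIndependent_of_sub_of_conj (ht : Function.Injective t)
    (hdisj : ∀ i j, MulAut.conj g (t i) ≠ t j) :
    LinearIndependent k fun i => of k G (t i) - of k G (MulAut.conj g (t i)) :=
  Fintype.linearIndependent_iff.2 fun c hc j => by
    rw [← coeff_sum_smul_of_sub_of_conj_apply ht hdisj c j, hc, coeff_zero, Finsupp.coe_zero,
      Pi.zero_apply]

theorem span_of_sub_of_conj_eq_antiCentralizer (h2 : (2 : k) ≠ 0)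
    (hg : g ^ 2 ∈ Subgroup.center G) (ht : Function.Injective t)
    (hdisj : ∀ i j, MulAut.conj g (t i) ≠ t j)
    (hcover : ∀ x, MulAut.conj g x ≠ x → ∃ i, t i = x ∨ MulAut.conj g (t i) = x) :
    Submodule.span k (Set.range fun i => of k G (t i) - of k G (MulAut.conj g (t i))) =
      antiCentralizer k G (of k G g) := by
  refine le_antisymm (Submodule.span_le.2 <| Set.range_subset_iff.2 fun i =>
    of_sub_of_conj_mem_antiCentralizer hg (t i)) fun α hα => ?_
  refine (Submodule.mem_span_range_iff_exists_fun k).2 ⟨fun i => α.coeff (t i), ?_⟩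
  ext x
  by_cases hx : MulAut.conj g x = x
  · rw [coeff_sum_smul_of_sub_of_conj_apply_of_conj_eq _ hx,
      coeff_eq_zero_of_mem_antiCentralizer_of h2 hα hx]
  obtain ⟨i, rfl | rfl⟩ := hcover x hx
  · exact coeff_sum_smul_of_sub_of_conj_apply ht hdisj _ i
  · rw [coeff_sum_smul_of_sub_of_conj_apply_conj ht hdisj, mem_antiCentralizer_of_iff.1 hα]

theorem exists_basis_antiCentralizer_of (h2 : (2 : k) ≠ 0)
    (hg : g ^ 2 ∈ Subgroup.center G) (ht : Function.Injective t)
    (hdisj : ∀ i j, MulAut.conj g (t i) ≠ t j)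
    (hcover : ∀ x, MulAut.conj g x ≠ x → ∃ i, t i = x ∨ MulAut.conj g (t i) = x) :
    ∃ B : Module.Basis ι k (antiCentralizer k G (of k G g)),
      ∀ i, (B i : MonoidAlgebra k G) = of k G (t i) - of k G (MulAut.conj g (t i)) :=
  ⟨(Module.Basis.span (linearIndependent_of_sub_of_conj ht hdisj)).map
      (LinearEquiv.ofEq _ _ (span_of_sub_of_conj_eq_antiCentralizer h2 hg ht hdisj hcover)),
    fun i => by
      rw [Module.Basis.map_apply, LinearEquiv.coe_ofEq_apply, Module.Basis.span_apply]⟩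

end AntiCentralizer

namespace ZMod

variable {n : ℕ}

theorem natCast_add_one_injective_fin :
    Function.Injective fun j : Fin (n - 1) => ((j : ℕ) : ZMod (2 * n)) + 1 := by
  intro i j hij
  have := congr_arg ZMod.val hij
  simp only [← Nat.cast_add_one] at this
  rw [ZMod.val_natCast_of_lt (by omega), ZMod.val_natCast_of_lt (by omega)] at this
  exact Fin.ext (by omega)

theorem neg_natCast_add_one_ne (i j : Fin (n - 1)) :
    -(((i : ℕ) : ZMod (2 * n)) + 1) ≠ ((j : ℕ) : ZMod (2 * n)) + 1 := by
  intro h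
  have hsum : (((i + 1 + (j + 1) : ℕ)) : ZMod (2 * n)) = 0 := by
    push_cast; rw [← h, add_neg_cancel]
  have := Nat.le_of_dvd (by omega) ((ZMod.natCast_eq_zero_iff _ _).1 hsum)
  omega

theorem exists_fin_natCast_add_one_eq_or_neg_eq (hn : n ≠ 0) (m : ZMod (2 * n))
    (hm : -m ≠ m) :
    ∃ j : Fin (n - 1),
      ((j : ℕ) : ZMod (2 * n)) + 1 = m ∨ -(((j : ℕ) : ZMod (2 * n)) + 1) = m := by
  have : NeZero (2 * n) := ⟨by omega⟩
  obtain ⟨v, hv, rfl⟩ : ∃ v < 2 * n, (v : ZMod (2 * n)) = m :=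
    ⟨m.val, m.val_lt, m.natCast_zmod_val⟩
  have hv0 : v ≠ 0 := by
    rintro rfl
    simp at hm
  have hvn : v ≠ n := by
    rintro rfl
    rw [Ne, neg_eq_iff_add_eq_zero, ← Nat.cast_add, ← two_mul, ZMod.natCast_self] at hm
    exact hm rfl
  rcases lt_or_gt_of_ne hvn with hlt | hgt
  · refine ⟨⟨v - 1, by omega⟩, Or.inl ?_⟩
    rw [← Nat.cast_add_one, Nat.sub_add_cancel (by omega)]
  · refine ⟨⟨2 * n - v - 1, by omega⟩, Or.inr ?_⟩
    rw [← Nat.cast_add_one, Nat.sub_add_cancel (by omega), neg_eq_iff_add_eq_zero,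
      ← Nat.cast_add, Nat.sub_add_cancel hv.le, ZMod.natCast_self]

end ZMod

namespace QuaternionGroup

variable {n : ℕ}

theorem xa_sq_mem_center (i : ZMod (2 * n)) : xa i ^ 2 ∈ Subgroup.center (QuaternionGroup n) := by
  rw [xa_sq, Subgroup.mem_center_iff]
  rintro (j | j)
  · simp [add_comm]
  · have : (2 * n : ZMod (2 * n)) = 0 := by exact_mod_cast ZMod.natCast_self (2 * n)
    simp only [xa_mul_a, a_mul_xa, xa.injEq]
    linear_combination this

theorem conj_xa_a (i j : ZMod (2 * n)) : MulAut.conj (xa j) (a i) = a (-i) := by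
  rw [MulAut.conj_apply, mul_inv_eq_iff_eq_mul, xa_mul_a, a_mul_xa, sub_neg_eq_add]

theorem conj_xa_xa (i j : ZMod (2 * n)) : MulAut.conj (xa j) (xa i) = xa (2 * j - i) := by
  rw [MulAut.conj_apply, mul_inv_eq_iff_eq_mul, xa_mul_xa, xa_mul_xa]
  ring_nf

/-- One element from each two-element orbit of conjugation by `b = xa 0`:
`a ^ i` and `a ^ i * b = xa (-i)` for `1 ≤ i ≤ n - 1`. -/
def bConjOrbitRep (n : ℕ) : Fin (n - 1) ⊕ Fin (n - 1) → QuaternionGroup n :=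
  Sum.elim (fun j => a (((j : ℕ) : ZMod (2 * n)) + 1))
    (fun j => xa (-(((j : ℕ) : ZMod (2 * n)) + 1)))

theorem bConjOrbitRep_injective : Function.Injective (bConjOrbitRep n) := by
  refine Function.Injective.sumElim ?_ ?_ fun _ _ h => nomatch h
  · exact fun i j h => ZMod.natCast_add_one_injective_fin (a.inj h)
  · exact fun i j h => ZMod.natCast_add_one_injective_fin (neg_injective (xa.inj h))

theorem conj_bConjOrbitRep_ne (i j : Fin (n - 1) ⊕ Fin (n - 1)) :
    MulAut.conj (xa 0) (bConjOrbitRep n i) ≠ bConjOrbitRep n j := by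
  rcases i with i | i <;> rcases j with j | j <;>
    simp only [bConjOrbitRep, Sum.elim_inl, Sum.elim_inr, conj_xa_a, conj_xa_xa, mul_zero,
      zero_sub, neg_neg, ne_eq, a.injEq, xa.injEq, reduceCtorEq, not_false_eq_true]
  · exact ZMod.neg_natCast_add_one_ne i j
  · exact fun h => ZMod.neg_natCast_add_one_ne j i h.symm

theorem exists_bConjOrbitRep_of_conj_ne (hn : n ≠ 0) (x : QuaternionGroup n)
    (hx : MulAut.conj (xa 0) x ≠ x) :
    ∃ i, bConjOrbitRep n i = x ∨ MulAut.conj (xa 0) (bConjOrbitRep n i) = x := by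
  rcases x with m | m
  · rw [conj_xa_a, Ne, a.injEq] at hx
    obtain ⟨j, hj | hj⟩ := ZMod.exists_fin_natCast_add_one_eq_or_neg_eq hn m hx
    · exact ⟨.inl j, .inl (by rw [bConjOrbitRep, Sum.elim_inl, hj])⟩
    · exact ⟨.inl j, .inr (by rw [bConjOrbitRep, Sum.elim_inl, conj_xa_a, hj])⟩
  · rw [conj_xa_xa, mul_zero, zero_sub, Ne, xa.injEq] at hx
    obtain ⟨j, hj | hj⟩ := ZMod.exists_fin_natCast_add_one_eq_or_neg_eq hn m hx
    · exact ⟨.inr j, .inr (by rw [bConjOrbitRep, Sum.elim_inr, conj_xa_xa, mul_zero, zero_sub,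
        neg_neg, hj])⟩
    · exact ⟨.inr j, .inl (by rw [bConjOrbitRep, Sum.elim_inr, hj])⟩

end QuaternionGroup

open QuaternionGroup

/-- For a field `F` of characteristic `0` or an odd prime, the set
`{a^i - a^{-i}, (a^i - a^{-i}) b : 1 ≤ i ≤ n-1}` is an `F`-basis of the
anti-centralizer `C̄(b)` in the dicyclic group algebra `F T_{4n}`. -/
theorem basis_antiCentralizer_b_quaternion (F : Type*) [Field F] (n : ℕ) (hn : 2 ≤ n)
    (hchar : ringChar F = 0 ∨ (Nat.Prime (ringChar F) ∧ Odd (ringChar F))) :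
    ∃ B : Module.Basis (Fin (n - 1) ⊕ Fin (n - 1)) F
        (antiCentralizer F (QuaternionGroup n) (bQ F n)),
      (∀ i : Fin (n - 1),
          (B (Sum.inl i) : MonoidAlgebra F (QuaternionGroup n)) =
            aQ F n ((i : ℤ) + 1) - aQ F n (-((i : ℤ) + 1))) ∧
      (∀ i : Fin (n - 1),
          (B (Sum.inr i) : MonoidAlgebra F (QuaternionGroup n)) =
            (aQ F n ((i : ℤ) + 1) - aQ F n (-((i : ℤ) + 1))) * bQ F n) := by
  have h2 : (2 : F) ≠ 0 := Ring.two_ne_zero <| by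
    rcases hchar with h | ⟨-, hodd⟩
    · rw [h]; decide
    · rintro h; rw [h] at hodd; exact Nat.not_odd_iff_even.2 even_two hodd
  obtain ⟨B, hB⟩ := exists_basis_antiCentralizer_of h2 (xa_sq_mem_center 0)
    bConjOrbitRep_injective conj_bConjOrbitRep_ne
    (exists_bConjOrbitRep_of_conj_ne (n := n) (by omega))
  refine ⟨B, fun i => (hB _).trans ?_, fun i => (hB _).trans ?_⟩
  · rw [bConjOrbitRep, Sum.elim_inl, conj_xa_a]
    simp [aQ]
  · rw [bConjOrbitRep, Sum.elim_inr, conj_xa_xa]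
    simp [aQ, bQ, sub_mul]
end

section
/- Let n ≥ 2 and let F be a field of characteristic 0 or of odd prime characteristic p. In the group algebra F T_{4n} of the dicyclic group T_{4n} = ⟨a, b | a^{2n} = 1, b² = aⁿ, b⁻¹ab = a⁻¹⟩, the set {aⁱ − a⁻ⁱ, a^{n+1}(aⁱ − a⁻ⁱ)b : i = 1, 2, ..., n−1} is an F-basis of the anti-centralizer C̄(a^{n+1}b) = {α ∈ F T_{4n} : α(a^{n+1}b) = −(a^{n+1}b)α}. -/
open MonoidAlgebra

/-!
Write `β = a^{n+1} b`. Since `β² = aⁿ` is central, `σ g = β g β⁻¹` is an involution of `T_{4n}`,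
and `α β = -β α` says exactly that the coefficients of `α` satisfy `α (σ g) = -α g`. Away from
characteristic `2` these vanish at the fixed points of `σ`, so `C̄(β)` has the basis `g - σ g`,
`g` running over one point of each two-element `σ`-orbit. In `T_{4n}` the conjugation is
`σ aᵏ = a⁻ᵏ` and `σ (aᵏ b) = a^{2-k} b`, and the two-element orbits are `{aⁱ, a⁻ⁱ}` and
`{a^{n+1+i} b, a^{n+1-i} b}` for `1 ≤ i ≤ n - 1`.
-/

section AntiCentralizer

variable {F G : Type*} [Field F] [Group G]

theorem coeff_conj_of_mem_antiCentralizer {β : G} {α : MonoidAlgebra F G}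
    (hα : α ∈ antiCentralizer F G (of F G β)) (g : G) :
    α.coeff (β * g * β⁻¹) = -α.coeff g := by
  have h : α * of F G β = -(of F G β * α) := hα
  simpa using congrArg (fun x : MonoidAlgebra F G => x.coeff (β * g)) h

theorem of_sub_of_conj_mem_antiCentralizer_s10 {β : G} (hβ : β ^ 2 ∈ Subgroup.center G) (g : G) :
    of F G g - of F G (β * g * β⁻¹) ∈ antiCentralizer F G (of F G β) := by
  have hcomm : g * β ^ 2 = β ^ 2 * g := Subgroup.mem_center_iff.mp hβ g
  have hg : β * (β * g * β⁻¹) = g * β := by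
    calc β * (β * g * β⁻¹) = β ^ 2 * g * β⁻¹ := by simp only [sq, mul_assoc]
      _ = g * β := by rw [← hcomm]; group
  show _ * _ = -(_ * _)
  simp only [sub_mul, mul_sub, ← map_mul, hg, inv_mul_cancel_right, neg_sub]

theorem eq_zero_of_mem_antiCentralizer_of_coeff_eq_zero {ι : Type*} (hF : ringChar F ≠ 2)
    {β : G} {r : ι → G}
    (hcover : ∀ g, β * g * β⁻¹ ≠ g → ∃ i, g = r i ∨ g = β * r i * β⁻¹)
    {α : MonoidAlgebra F G} (hα : α ∈ antiCentralizer F G (of F G β))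
    (hr : ∀ i, α.coeff (r i) = 0) : α = 0 := by
  ext g
  by_cases hg : β * g * β⁻¹ = g
  · have h := coeff_conj_of_mem_antiCentralizer hα g
    rw [hg, eq_comm] at h
    exact (Ring.eq_self_iff_eq_zero_of_char_ne_two hF).mp h
  · obtain ⟨i, rfl | rfl⟩ := hcover g hg
    · exact hr i
    · rw [coeff_conj_of_mem_antiCentralizer hα, hr i, neg_zero, coeff_zero, Finsupp.zero_apply]

theorem exists_basis_antiCentralizer {ι : Type*} [Finite ι] (hF : ringChar F ≠ 2) {β : G}
    (hβ : β ^ 2 ∈ Subgroup.center G) (r : ι → G) (hr : Function.Injective r)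
    (hdisj : ∀ i j, r i ≠ β * r j * β⁻¹)
    (hcover : ∀ g, β * g * β⁻¹ ≠ g → ∃ i, g = r i ∨ g = β * r i * β⁻¹) :
    ∃ B : Module.Basis ι F (antiCentralizer F G (of F G β)),
      ∀ i, (B i : MonoidAlgebra F G) = of F G (r i) - of F G (β * r i * β⁻¹) := by
  classical
  set S := antiCentralizer F G (of F G β)
  let v : ι → S := fun i => ⟨_, of_sub_of_conj_mem_antiCentralizer_s10 hβ (r i)⟩
  -- The coordinates at the transversal `r` identify `C̄(β)` with `ι → F`.
  let E : S →ₗ[F] ι → F := LinearMap.pi (fun i => Finsupp.lapply (r i)) ∘ₗ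
    (coeffLinearEquiv F).toLinearMap ∘ₗ S.subtype
  have hEv : ∀ j, E (v j) = Pi.single j 1 := by
    intro j
    funext i
    simp [E, v, Finsupp.single_apply, Pi.single_apply, hr.eq_iff, hdisj i j, eq_comm]
  have hinj : Function.Injective E := by
    rw [← LinearMap.ker_eq_bot, LinearMap.ker_eq_bot']
    intro α hα
    exact Subtype.ext <|
      eq_zero_of_mem_antiCentralizer_of_coeff_eq_zero hF hcover α.2 fun i => congrFun hα i
  have hsurj : Function.Surjective E := by
    rw [← LinearMap.range_eq_top, eq_top_iff, ← (Pi.basisFun F ι).span_eq, Submodule.span_le]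
    rintro _ ⟨j, rfl⟩
    exact ⟨v j, by simpa using hEv j⟩
  let e := LinearEquiv.ofBijective E ⟨hinj, hsurj⟩
  refine ⟨.ofEquivFun e, fun i => ?_⟩
  have hei : e.symm (Pi.single i 1) = v i := by
    rw [LinearEquiv.symm_apply_eq]
    exact (hEv i).symm
  rw [Module.Basis.coe_ofEquivFun]
  exact congrArg Subtype.val hei

end AntiCentralizer

namespace QuaternionGroup

variable {n : ℕ}

theorem two_mul_natCast_self (n : ℕ) : (2 * n : ZMod (2 * n)) = 0 := by
  exact_mod_cast ZMod.natCast_self (2 * n)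

theorem inv_xa (i : ZMod (2 * n)) : (xa i)⁻¹ = xa ((n : ZMod (2 * n)) + i) := rfl

theorem xa_mul_a_mul_xa_inv (i k : ZMod (2 * n)) : xa i * a k * (xa i)⁻¹ = a (-k) := by
  rw [inv_xa, xa_mul_a, xa_mul_xa, a.injEq]
  linear_combination two_mul_natCast_self n

theorem xa_mul_xa_mul_xa_inv (i k : ZMod (2 * n)) :
    xa i * xa k * (xa i)⁻¹ = xa (2 * i - k) := by
  rw [inv_xa, xa_mul_xa, a_mul_xa, xa.injEq]
  ring

theorem neg_natCast_self : -(n : ZMod (2 * n)) = n := by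
  linear_combination -two_mul_natCast_self n

theorem natCast_fin_inj (i j : Fin (n - 1)) : ((i : ℕ) : ZMod (2 * n)) = j ↔ i = j := by
  rw [ZMod.natCast_eq_natCast_iff', Nat.mod_eq_of_lt (by omega), Nat.mod_eq_of_lt (by omega),
    Fin.val_inj]

theorem natCast_fin_succ_ne_neg (i j : Fin (n - 1)) :
    ((i : ℕ) + 1 : ZMod (2 * n)) ≠ -((j : ℕ) + 1) := by
  intro h
  have hdvd : 2 * n ∣ (i : ℕ) + 1 + ((j : ℕ) + 1) := by
    rw [← ZMod.natCast_eq_zero_iff]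
    push_cast
    linear_combination h
  have := Nat.le_of_dvd (by omega) hdvd
  omega

theorem exists_eq_fin_succ_or_eq_neg [NeZero n] {k : ZMod (2 * n)} (h0 : k ≠ 0) (hn : k ≠ n) :
    ∃ i : Fin (n - 1), k = (i : ℕ) + 1 ∨ k = -((i : ℕ) + 1) := by
  set p := k.valMinAbs.natAbs
  have hp : p ≤ n := by
    have := ZMod.natAbs_valMinAbs_le k
    omega
  have hpk : k = p ∨ k = -p := by
    rw [ZMod.natCast_natAbs_valMinAbs]
    split_ifs <;> simp
  have hp0 : p ≠ 0 := by
    rintro hp0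
    rw [hp0, Nat.cast_zero, neg_zero, or_self] at hpk
    exact h0 hpk
  have hpn : p ≠ n := by
    rintro hpn
    rw [hpn, neg_natCast_self, or_self] at hpk
    exact hn hpk
  have hsucc : ((p - 1 : ℕ) : ZMod (2 * n)) + 1 = p := by
    rw [← Nat.cast_add_one, Nat.sub_one_add_one hp0]
  exact ⟨⟨p - 1, by omega⟩, by rwa [hsucc]⟩

theorem exists_basis_antiCentralizer_xa {F : Type*} [Field F] [NeZero n] (hF : ringChar F ≠ 2)
    (j : ZMod (2 * n)) :
    ∃ B : Module.Basis (Fin (n - 1) ⊕ Fin (n - 1)) F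
        (antiCentralizer F (QuaternionGroup n) (of F _ (xa j))),
      (∀ i : Fin (n - 1), (B (.inl i) : MonoidAlgebra F (QuaternionGroup n)) =
          of F _ (a ((i : ℕ) + 1)) - of F _ (a (-((i : ℕ) + 1)))) ∧
      ∀ i : Fin (n - 1), (B (.inr i) : MonoidAlgebra F (QuaternionGroup n)) =
          of F _ (xa (j - ((i : ℕ) + 1 : ZMod (2 * n)))) -
            of F _ (xa (j + ((i : ℕ) + 1 : ZMod (2 * n)))) := by
  let r : Fin (n - 1) ⊕ Fin (n - 1) → QuaternionGroup n :=
    Sum.elim (fun i => a ((i : ℕ) + 1)) (fun i => xa (j - ((i : ℕ) + 1)))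
  have hr : Function.Injective r := by
    rintro (i | i) (i' | i') h <;>
      simp only [r, Sum.elim_inl, Sum.elim_inr, a.injEq, xa.injEq, reduceCtorEq, add_left_inj,
        sub_right_inj, natCast_fin_inj] at h
    all_goals rw [h]
  have hdisj : ∀ x y, r x ≠ xa j * r y * (xa j)⁻¹ := by
    rintro (i | i) (i' | i') h <;>
      simp only [r, Sum.elim_inl, Sum.elim_inr, xa_mul_a_mul_xa_inv, xa_mul_xa_mul_xa_inv,
        a.injEq, xa.injEq, reduceCtorEq] at h
    · exact natCast_fin_succ_ne_neg i i' h
    · exact natCast_fin_succ_ne_neg i i' (by linear_combination -h)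
  have hcover : ∀ g, xa j * g * (xa j)⁻¹ ≠ g → ∃ x, g = r x ∨ g = xa j * r x * (xa j)⁻¹ := by
    rintro (k | k) hk
    · rw [xa_mul_a_mul_xa_inv, Ne, a.injEq] at hk
      obtain ⟨i, hi | hi⟩ := exists_eq_fin_succ_or_eq_neg (k := k)
        (by rintro rfl; simp at hk) (by rintro rfl; exact hk neg_natCast_self)
      · exact ⟨.inl i, .inl (by rw [hi]; rfl)⟩
      · refine ⟨.inl i, .inr ?_⟩
        rw [hi]
        simp only [r, Sum.elim_inl, xa_mul_a_mul_xa_inv]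
    · rw [xa_mul_xa_mul_xa_inv, Ne, xa.injEq] at hk
      obtain ⟨i, hi | hi⟩ := exists_eq_fin_succ_or_eq_neg (k := j - k)
        (fun h => hk (by linear_combination 2 * h))
        (fun h => hk (by linear_combination 2 * h + two_mul_natCast_self n))
      · refine ⟨.inr i, .inl ?_⟩
        simp only [r, Sum.elim_inr, xa.injEq]
        linear_combination -hi
      · refine ⟨.inr i, .inr ?_⟩
        simp only [r, Sum.elim_inr, xa_mul_xa_mul_xa_inv, xa.injEq]
        linear_combination -hi
  obtain ⟨B, hB⟩ := exists_basis_antiCentralizer hF (xa_sq_mem_center j) r hr hdisj hcover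
  refine ⟨B, fun i => ?_, fun i => ?_⟩
  · rw [hB]
    simp only [r, Sum.elim_inl, xa_mul_a_mul_xa_inv]
  · rw [hB]
    simp only [r, Sum.elim_inr, xa_mul_xa_mul_xa_inv]
    congr 3
    ring

end QuaternionGroup

/-- For a field `F` of characteristic `0` or an odd prime, the set
`{a^i - a^{-i}, a^{n+1} (a^i - a^{-i}) b : 1 ≤ i ≤ n-1}` is an `F`-basis of the
anti-centralizer `C̄(a^{n+1} b)` in the dicyclic group algebra `F T_{4n}`. -/
theorem basis_antiCentralizer_anb_quaternion (F : Type*) [Field F] (n : ℕ) (hn : 2 ≤ n)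
    (hchar : ringChar F = 0 ∨ (Nat.Prime (ringChar F) ∧ Odd (ringChar F))) :
    ∃ B : Module.Basis (Fin (n - 1) ⊕ Fin (n - 1)) F
        (antiCentralizer F (QuaternionGroup n) (aQ F n ((n : ℤ) + 1) * bQ F n)),
      (∀ i : Fin (n - 1),
          (B (Sum.inl i) : MonoidAlgebra F (QuaternionGroup n)) =
            aQ F n ((i : ℤ) + 1) - aQ F n (-((i : ℤ) + 1))) ∧
      (∀ i : Fin (n - 1),
          (B (Sum.inr i) : MonoidAlgebra F (QuaternionGroup n)) =
            aQ F n ((n : ℤ) + 1) *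
              (aQ F n ((i : ℤ) + 1) - aQ F n (-((i : ℤ) + 1))) * bQ F n) := by
  have hF : ringChar F ≠ 2 := by
    rcases hchar with h | ⟨-, hodd⟩
    · omega
    · rintro h2
      rw [h2] at hodd
      exact absurd hodd (by decide)
  have : NeZero n := ⟨by omega⟩
  have hβ : aQ F n ((n : ℤ) + 1) * bQ F n =
      of F _ (QuaternionGroup.xa (-((n : ZMod (2 * n)) + 1))) := by
    simp [aQ, bQ]
  obtain ⟨B, hinl, hinr⟩ :=
    QuaternionGroup.exists_basis_antiCentralizer_xa (F := F) hF (-((n : ZMod (2 * n)) + 1))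
  rw [hβ]
  refine ⟨B, fun i => ?_, fun i => ?_⟩
  · rw [hinl]
    simp [aQ]
  · rw [hinr]
    simp only [aQ, bQ, mul_sub, sub_mul, ← map_mul, QuaternionGroup.a_mul_a,
      QuaternionGroup.a_mul_xa]
    congr 3 <;> push_cast <;> ring
end

section
/- Let n ≥ 2 and let F be an arbitrary field. Then the F-vector space of inner derivations of the dicyclic group algebra F T_{4n} has dimension 3(n−1) over F. -/
open MonoidAlgebra

/-!
The kernel of `β ↦ d_β` is the centre of `F G`, whose elements are exactly the `β` with
coefficients constant on conjugacy classes; so for finite `G` the inner derivations have dimension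
`|G| - k(G)`, with `k(G)` the class number. For `T_{4n}` the class number is read off from
`#{commuting pairs} = k(G) |G|`: two powers of `a` always commute, while `a^i` commutes with
`x a^j` iff `2i = 0`, and `x a^i` with `x a^j` iff `2(j - i) = 0` in `ZMod (2n)`, i.e. iff `i`,
resp. `j - i`, is `0` or `n`. This gives `4n(n + 3)` commuting pairs, `k(T_{4n}) = n + 3`, and the
dimension `4n - (n + 3) = 3(n - 1)`.
-/

section InnerDerivations

variable {F G : Type*} [Field F] [Group G]

theorem innerDerivMap_apply (β α : MonoidAlgebra F G) :
    innerDerivMap F G β α = α * β - β * α := rfl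

theorem commute_single_one_iff (g : G) (β : MonoidAlgebra F G) :
    Commute (single g (1 : F)) β ↔ ∀ x, β.coeff (g * x * g⁻¹) = β.coeff x := by
  constructor
  · intro h x
    have := congrArg (fun γ : MonoidAlgebra F G => γ.coeff (g * x)) h.eq
    simpa [coeff_single_mul_apply, coeff_mul_single_apply, mul_assoc] using this.symm
  · intro h
    refine MonoidAlgebra.ext (Finsupp.ext fun y => ?_)
    simpa [coeff_single_mul_apply, coeff_mul_single_apply, mul_assoc] using (h (g⁻¹ * y)).symm

theorem mem_ker_innerDerivMap_iff_commute (β : MonoidAlgebra F G) :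
    β ∈ LinearMap.ker (innerDerivMap F G) ↔ ∀ g : G, Commute (single g (1 : F)) β := by
  simp only [LinearMap.mem_ker, LinearMap.ext_iff, innerDerivMap_apply, LinearMap.zero_apply,
    sub_eq_zero]
  refine ⟨fun h g => h _, fun h α => ?_⟩
  induction α using MonoidAlgebra.induction_on with
  | of g => exact (h g).eq
  | add α γ hα hγ => rw [add_mul, mul_add, hα, hγ]
  | smul r α hα => rw [smul_mul_assoc, mul_smul_comm, hα]

theorem mem_ker_innerDerivMap_iff_s13 (β : MonoidAlgebra F G) :
    β ∈ LinearMap.ker (innerDerivMap F G) ↔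
      ∀ x y : G, IsConj x y → β.coeff x = β.coeff y := by
  simp only [mem_ker_innerDerivMap_iff_commute, commute_single_one_iff, isConj_iff]
  constructor
  · rintro h x _ ⟨g, rfl⟩
    exact (h g x).symm
  · intro h g x
    exact (h x _ ⟨g, rfl⟩).symm

variable (F G) [Finite G]

noncomputable def ofClassFunction : (ConjClasses G → F) →ₗ[F] MonoidAlgebra F G :=
  (coeffLinearEquiv F).symm.toLinearMap ∘ₗ
    (Finsupp.linearEquivFunOnFinite F F G).symm.toLinearMap ∘ₗ
      LinearMap.funLeft F F ConjClasses.mk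

variable {F G}

@[simp]
theorem coeff_ofClassFunction (f : ConjClasses G → F) (x : G) :
    (ofClassFunction F G f).coeff x = f (ConjClasses.mk x) := rfl

theorem ofClassFunction_injective : Function.Injective (ofClassFunction F G) :=
  (coeffLinearEquiv F).symm.injective.comp <|
    (Finsupp.linearEquivFunOnFinite F F G).symm.injective.comp <|
      LinearMap.funLeft_injective_of_surjective _ _ _ ConjClasses.mk_surjective

theorem range_ofClassFunction :
    LinearMap.range (ofClassFunction F G) = LinearMap.ker (innerDerivMap F G) := by
  ext β
  rw [LinearMap.mem_range, mem_ker_innerDerivMap_iff_s13]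
  constructor
  · rintro ⟨f, rfl⟩ x y hxy
    simp [ConjClasses.mk_eq_mk_iff_isConj.mpr hxy]
  · intro h
    refine ⟨fun c => β.coeff c.exists_rep.choose, MonoidAlgebra.ext (Finsupp.ext fun x => ?_)⟩
    exact h _ _ (ConjClasses.mk_eq_mk_iff_isConj.mp (ConjClasses.mk x).exists_rep.choose_spec)

variable (F G)

theorem finrank_ker_innerDerivMap :
    Module.finrank F (LinearMap.ker (innerDerivMap F G)) = Nat.card (ConjClasses G) := by
  have := Fintype.ofFinite (ConjClasses G)
  rw [← range_ofClassFunction, LinearMap.finrank_range_of_inj ofClassFunction_injective,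
    Module.finrank_fintype_fun_eq_card, Nat.card_eq_fintype_card]

theorem finrank_range_innerDerivMap :
    Module.finrank F (LinearMap.range (innerDerivMap F G)) =
      Nat.card G - Nat.card (ConjClasses G) := by
  have := (innerDerivMap F G).finrank_range_add_finrank_ker
  rw [finrank_ker_innerDerivMap, Module.finrank_eq_nat_card_basis (basis G F)] at this
  omega

end InnerDerivations

namespace ZMod

variable {n : ℕ} [NeZero n]

theorem add_self_eq_zero_iff_eq_zero_or_eq_natCast (i : ZMod (2 * n)) :
    i + i = 0 ↔ i = 0 ∨ i = n := by
  obtain ⟨m, hm, rfl⟩ : ∃ m < 2 * n, (m : ZMod (2 * n)) = i :=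
    ⟨i.val, val_lt i, natCast_zmod_val i⟩
  rw [← Nat.cast_add, natCast_eq_zero_iff, natCast_eq_zero_iff, natCast_eq_natCast_iff',
    Nat.mod_eq_of_lt hm, Nat.mod_eq_of_lt (by omega)]
  constructor
  · rintro ⟨k, hk⟩
    obtain rfl | rfl : k = 0 ∨ k = 1 := by
      have : k < 2 := by nlinarith
      omega
    · exact Or.inl ⟨0, by omega⟩
    · exact Or.inr (by omega)
  · rintro (⟨k, rfl⟩ | rfl)
    · obtain rfl : k = 0 := by nlinarith
      exact ⟨0, rfl⟩
    · exact ⟨1, by ring⟩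

theorem card_add_self_eq_zero : Nat.card {i : ZMod (2 * n) // i + i = 0} = 2 := by
  have hn : (n : ZMod (2 * n)) ≠ 0 := by
    have hpos := NeZero.pos n
    rw [Ne, natCast_eq_zero_iff]
    exact fun h => absurd (Nat.le_of_dvd hpos h) (by omega)
  simp_rw [add_self_eq_zero_iff_eq_zero_or_eq_natCast]
  exact Set.ncard_pair hn.symm

end ZMod

namespace QuaternionGroup

variable {n : ℕ}

def commuteEquiv :
    {p : QuaternionGroup n × QuaternionGroup n // Commute p.1 p.2} ≃
      (ZMod (2 * n) × ZMod (2 * n)) ⊕ ({i : ZMod (2 * n) // i + i = 0} × ZMod (2 * n)) ⊕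
        ({i : ZMod (2 * n) // i + i = 0} × ZMod (2 * n)) ⊕
          (ZMod (2 * n) × {i : ZMod (2 * n) // i + i = 0}) where
  toFun := fun
    | ⟨⟨a i, a j⟩, _⟩ => .inl (i, j)
    | ⟨⟨a i, xa j⟩, h⟩ =>
      .inr (.inl (⟨i, by linear_combination -xa.inj (h : xa (j - i) = _)⟩, j))
    | ⟨⟨xa i, a j⟩, h⟩ =>
      .inr (.inr (.inl (⟨j, by linear_combination xa.inj (h : xa (i + j) = _)⟩, i)))
    | ⟨⟨xa i, xa j⟩, h⟩ =>
      .inr (.inr (.inr (i, ⟨j - i, by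
        linear_combination a.inj (h : a ((n : ZMod (2 * n)) + j - i) = _)⟩)))
  invFun := fun
    | .inl (i, j) => ⟨(a i, a j), congrArg a (add_comm i j)⟩
    | .inr (.inl (s, j)) => ⟨(a s.1, xa j), congrArg xa (by linear_combination -s.2)⟩
    | .inr (.inr (.inl (s, i))) => ⟨(xa i, a s.1), congrArg xa (by linear_combination s.2)⟩
    | .inr (.inr (.inr (i, s))) =>
      ⟨(xa i, xa (i + s.1)), congrArg a (by linear_combination s.2)⟩
  left_inv := fun
    | ⟨⟨a _, a _⟩, _⟩ => rfl
    | ⟨⟨a _, xa _⟩, _⟩ => rfl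
    | ⟨⟨xa _, a _⟩, _⟩ => rfl
    | ⟨⟨xa _, xa _⟩, _⟩ => Subtype.ext (by simp)
  right_inv := fun
    | .inl _ => rfl
    | .inr (.inl _) => rfl
    | .inr (.inr (.inl _)) => rfl
    | .inr (.inr (.inr _)) => by simp

theorem card_commute [NeZero n] :
    Nat.card {p : QuaternionGroup n × QuaternionGroup n // Commute p.1 p.2} =
      4 * n * (n + 3) := by
  simp only [Nat.card_congr commuteEquiv, Nat.card_sum, Nat.card_prod, Nat.card_zmod,
    ZMod.card_add_self_eq_zero]
  ring

theorem card_conjClasses [NeZero n] : Nat.card (ConjClasses (QuaternionGroup n)) = n + 3 := by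
  have h := card_comm_eq_card_conjClasses_mul_card (QuaternionGroup n)
  rw [card_commute, Nat.card_eq_fintype_card (α := QuaternionGroup n), QuaternionGroup.card,
    mul_comm] at h
  exact (Nat.eq_of_mul_eq_mul_right (by have := NeZero.pos n; omega) h).symm

end QuaternionGroup

/-- For any field `F`, the space of inner derivations of the dicyclic group
algebra `F T_{4n}` has dimension `3(n-1)`. -/
theorem finrank_innerDerivations_quaternion (F : Type*) [Field F] (n : ℕ) (hn : 2 ≤ n) :
    Module.finrank F (LinearMap.range (innerDerivMap F (QuaternionGroup n))) =
      3 * (n - 1) := by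
  have : NeZero n := ⟨by omega⟩
  rw [finrank_range_innerDerivMap, QuaternionGroup.card_conjClasses, Nat.card_eq_fintype_card,
    QuaternionGroup.card]
  omega
end

section
/- Let n ≥ 2 and let F be a field that is an algebraic extension of its prime field, of odd prime characteristic p with p ∣ n. Then the dicyclic group algebra F T_{4n} has a non-zero outer derivation: there exists an additive map d : F T_{4n} → F T_{4n} satisfying d(xy) = d(x)y + x d(y) for all x, y, such that for every β ∈ F T_{4n} there is some α with d(α) ≠ αβ − βα. -/
/-!
Write `w = a - a⁻¹` and let `χ : T_{4n} → F` be the sign character with kernel `⟨a⟩`, so that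
`g w = χ(g) w g`. For any `ν : T_{4n} → F` with `ν(gh) = ν(g) + χ(g) ν(h)`, the linear extension of
`g ↦ ν(g) w g` is a derivation. Such a `ν` is `aⁱ ↦ i`, `x aⁱ ↦ -i` (read in `F`): it is well defined
on `ℤ/2n` and compatible with `x² = aⁿ` exactly because `p ∣ n`. This derivation sends the central
element `a + a⁻¹`, which every inner derivation kills, to `w² = a² - 2 + a⁻²`, whose coefficient
at `1` is `-2 ≠ 0` as `p` is odd.
-/

open MonoidAlgebra

namespace MonoidAlgebra

theorem leibniz_of_leibniz_single {k G : Type*} [Semiring k] [Mul G]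
    (d : MonoidAlgebra k G →+ MonoidAlgebra k G)
    (hd : ∀ g h r s,
      d (single g r * single h s) = d (single g r) * single h s + single g r * d (single h s))
    (x y : MonoidAlgebra k G) : d (x * y) = d x * y + x * d y := by
  induction x using induction_linear with
  | zero => simp
  | add x x' hx hx' => simp only [add_mul, map_add, hx, hx']; abel
  | single g r =>
    induction y using induction_linear with
    | zero => simp
    | add y y' hy hy' => simp only [mul_add, map_add, hy, hy']; abel
    | single h s => exact hd g h r s

section Twisted

variable {k G : Type*} [CommSemiring k] [Semigroup G]

noncomputable def twistedDerivation (w : MonoidAlgebra k G) (ν : G → k) :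
    MonoidAlgebra k G →+ MonoidAlgebra k G :=
  (Finsupp.liftAddHom fun g =>
      (AddMonoidHom.mulLeft w).comp ((singleAddHom g).comp (AddMonoidHom.mulLeft (ν g)))).comp
    coeffAddEquiv.toAddMonoidHom

theorem twistedDerivation_single (w : MonoidAlgebra k G) (ν : G → k) (g : G) (r : k) :
    twistedDerivation w ν (single g r) = w * single g (ν g * r) :=
  Finsupp.liftAddHom_apply_single _ _ _

theorem twistedDerivation_mul (w : MonoidAlgebra k G) (χ ν : G → k)
    (hw : ∀ g, single g 1 * w = χ g • (w * single g 1))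
    (hν : ∀ g h, ν (g * h) = ν g + χ g * ν h) (x y : MonoidAlgebra k G) :
    twistedDerivation w ν (x * y) = twistedDerivation w ν x * y + x * twistedDerivation w ν y := by
  refine leibniz_of_leibniz_single _ (fun g h r s => ?_) x y
  have hsingle (g : G) (r : k) : single g r = r • single g 1 := by rw [smul_single', mul_one]
  have hgh : single g 1 * single h 1 = (single (g * h) 1 : MonoidAlgebra k G) := by
    rw [single_mul_single, mul_one]
  rw [single_mul_single, twistedDerivation_single, twistedDerivation_single,
    twistedDerivation_single, hsingle (g * h), hsingle g (ν g * r), hsingle h s, hsingle g r,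
    hsingle h (ν h * s), hν]
  simp only [mul_smul_comm, smul_mul_assoc, ← mul_assoc, hw, mul_assoc w, hgh]
  rw [smul_smul, smul_smul, smul_smul, ← add_smul]
  ring_nf

end Twisted

end MonoidAlgebra

namespace QuaternionGroup

variable {R : Type*} [CommRing R] {n : ℕ}

variable (R) in
def sign : QuaternionGroup n → R
  | a _ => 1
  | xa _ => -1

def weight (φ : ZMod (2 * n) →+ R) : QuaternionGroup n → R
  | a i => φ i
  | xa i => -φ i

theorem weight_mul {φ : ZMod (2 * n) →+ R} (hφ : φ n = 0) (g h : QuaternionGroup n) :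
    weight φ (g * h) = weight φ g + sign R g * weight φ h := by
  rcases g with i | i <;> rcases h with j | j <;>
    simp only [weight, sign, a_mul_a, a_mul_xa, xa_mul_a, xa_mul_xa, map_add, map_sub, hφ] <;>
    ring

variable (R n) in
noncomputable def aSubAInv : MonoidAlgebra R (QuaternionGroup n) :=
  single (a 1) 1 - single (a (-1)) 1

variable (R n) in
noncomputable def aAddAInv : MonoidAlgebra R (QuaternionGroup n) :=
  single (a 1) 1 + single (a (-1)) 1

theorem single_mul_aSubAInv (g : QuaternionGroup n) :
    single g 1 * aSubAInv R n = sign R g • (aSubAInv R n * single g 1) := by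
  rcases g with i | i <;>
    simp only [aSubAInv, sign, sub_mul, mul_sub, single_mul_single, a_mul_a, a_mul_xa, xa_mul_a,
      mul_one, one_smul, neg_smul, neg_sub] <;>
    ring_nf

theorem commute_aAddAInv (β : MonoidAlgebra R (QuaternionGroup n)) :
    Commute (aAddAInv R n) β := by
  induction β using induction_linear with
  | zero => exact Commute.zero_right _
  | add x y hx hy => exact hx.add_right hy
  | single g r =>
    rcases g with i | i <;>
      simp only [Commute, SemiconjBy, aAddAInv, add_mul, mul_add, single_mul_single, a_mul_a,
        a_mul_xa, xa_mul_a, one_mul, mul_one] <;>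
      ring_nf
    exact add_comm _ _

theorem twistedDerivation_aAddAInv (φ : ZMod (2 * n) →+ R) :
    twistedDerivation (aSubAInv R n) (weight φ) (aAddAInv R n) =
      φ 1 • (aSubAInv R n * aSubAInv R n) := by
  rw [aAddAInv, map_add, twistedDerivation_single, twistedDerivation_single, ← mul_smul_comm,
    ← mul_add]
  congr 1
  rw [aSubAInv, smul_sub, smul_single', smul_single', mul_one, sub_eq_add_neg, ← single_neg]
  simp only [weight, map_neg, mul_one]

theorem aSubAInv_mul_self_ne_zero (hR : (2 : R) ≠ 0) (hn : (2 : ZMod (2 * n)) ≠ 0) :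
    aSubAInv R n * aSubAInv R n ≠ 0 := by
  have h2 : (a 2 : QuaternionGroup n) ≠ 1 := by simpa only [one_def, ne_eq, a.injEq] using hn
  have h2' : (a (-2) : QuaternionGroup n) ≠ 1 := by
    simpa only [one_def, ne_eq, a.injEq, neg_eq_zero] using hn
  intro h
  have h1 := congrArg (fun x : MonoidAlgebra R (QuaternionGroup n) => x.coeff 1) h
  simp only [aSubAInv, sub_mul, mul_sub, single_mul_single, a_mul_a, mul_one, coeff_sub,
    coeff_single, coeff_zero, Finsupp.sub_apply, Finsupp.single_apply, Finsupp.zero_apply] at h1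
  norm_num [h2, h2', one_def] at h1
  exact hR h1

end QuaternionGroup

theorem exists_outer_derivation_quaternion_general (F : Type*) [Field F] (n : ℕ)
    (hchar : Nat.Prime (ringChar F) ∧ Odd (ringChar F) ∧ ringChar F ∣ n) :
    ∃ d : MonoidAlgebra F (QuaternionGroup n) →+ MonoidAlgebra F (QuaternionGroup n),
      (∀ x y : MonoidAlgebra F (QuaternionGroup n), d (x * y) = d x * y + x * d y) ∧
      ∀ β : MonoidAlgebra F (QuaternionGroup n),
        ∃ α : MonoidAlgebra F (QuaternionGroup n), d α ≠ α * β - β * α := by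
  obtain ⟨hp, hodd, hdvd⟩ := hchar
  have : CharP F (ringChar F) := ringChar.charP F
  let φ : ZMod (2 * n) →+* F := ZMod.castHom (hdvd.mul_left 2) F
  have hφn : φ n = 0 := by rw [map_natCast, CharP.cast_eq_zero_iff F (ringChar F)]; exact hdvd
  have h2F : (2 : F) ≠ 0 := Ring.two_ne_zero fun h => by
    rw [h] at hodd; exact absurd hodd (by decide)
  have h2n : (2 : ZMod (2 * n)) ≠ 0 := by
    intro h
    have h2 : 2 * n ∣ 2 * 1 := (ZMod.natCast_eq_zero_iff 2 (2 * n)).mp (by exact_mod_cast h)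
    have hn1 : n ∣ 1 := Nat.dvd_of_mul_dvd_mul_left two_pos h2
    exact hp.one_lt.ne' (Nat.dvd_one.mp (hdvd.trans hn1))
  refine ⟨twistedDerivation (QuaternionGroup.aSubAInv F n) (QuaternionGroup.weight φ.toAddMonoidHom),
    twistedDerivation_mul _ (QuaternionGroup.sign F) _ QuaternionGroup.single_mul_aSubAInv
      (QuaternionGroup.weight_mul hφn),
    fun β => ⟨QuaternionGroup.aAddAInv F n, ?_⟩⟩
  rw [(QuaternionGroup.commute_aAddAInv β).eq, sub_self,
    QuaternionGroup.twistedDerivation_aAddAInv]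
  simpa using QuaternionGroup.aSubAInv_mul_self_ne_zero h2F h2n

/-- If `F` is an algebraic extension of its prime field (the bottom subfield of `F`)
of odd prime characteristic `p` with `p ∣ n`, then the dicyclic group algebra
`F T_{4n}` has a non-zero outer derivation. -/
theorem exists_outer_derivation_quaternion (F : Type*) [Field F]
    [Algebra.IsAlgebraic (⊥ : Subfield F) F] (n : ℕ) (hn : 2 ≤ n)
    (hchar : Nat.Prime (ringChar F) ∧ Odd (ringChar F) ∧ ringChar F ∣ n) :
    ∃ d : MonoidAlgebra F (QuaternionGroup n) →+ MonoidAlgebra F (QuaternionGroup n),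
      (∀ x y : MonoidAlgebra F (QuaternionGroup n), d (x * y) = d x * y + x * d y) ∧
      ∀ β : MonoidAlgebra F (QuaternionGroup n),
        ∃ α : MonoidAlgebra F (QuaternionGroup n), d α ≠ α * β - β * α :=
  exists_outer_derivation_quaternion_general F n hchar
end

section
/- Let n be a positive integer, let G be a finite group of order 8n, and let a, b ∈ G with orderOf(a) = 4n, b² = 1, bab = a^{2n−1}, and G generated by {a, b} (so G ≅ SD_{8n}, the semidihedral group of order 8n). Let F be an arbitrary field. Then the F-vector space of inner derivations of the group algebra FG has dimension 3(2n−1) over F if n is even, and 6(n−1) over F if n is odd. -/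
/-!
The kernel of `β ↦ d_β` is the centre of `FG`, which consists of the class functions, so the
inner derivations form a space of dimension `|G| - k(G)`, where `k(G)` is the number of conjugacy
classes. The commuting pairs of `G` number `k(G) |G|`; writing the elements as `a ^ i` and
`a ^ i * b`, they can be counted whenever `b ∉ ⟨a⟩`, `b ^ 2 = 1` and `b a b = a ^ (k + 1)`,
giving `2 k(G) = m + 3 gcd(m, k)` for `m` the order of `a` and `|G| = 2m`. For `SD_{8n}`,
`gcd(4n, 2n - 2)` is `2` or `4` according to the parity of `n`.
-/

open MonoidAlgebra

namespace MonoidAlgebra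

variable {F G : Type*} [Field F] [Group G]

theorem innerDerivMap_apply (β α : MonoidAlgebra F G) :
    innerDerivMap F G β α = α * β - β * α :=
  rfl

theorem single_one_mul_eq_mul_single_one_iff (g : G) (β : MonoidAlgebra F G) :
    single g (1 : F) * β = β * single g 1 ↔
      ∀ x : G, β.coeff (g * x * g⁻¹) = β.coeff x := by
  rw [← coeff_inj, Finsupp.ext_iff]
  refine (Equiv.mulLeft g).forall_congr_right.symm.trans (forall_congr' fun x => ?_)
  simp [coeff_single_mul_apply, coeff_mul_single_apply, eq_comm]

theorem mem_ker_innerDerivMap_iff (β : MonoidAlgebra F G) :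
    β ∈ LinearMap.ker (innerDerivMap F G) ↔
      ∀ g x : G, β.coeff (g * x * g⁻¹) = β.coeff x := by
  simp_rw [← single_one_mul_eq_mul_single_one_iff, LinearMap.mem_ker, LinearMap.ext_iff,
    innerDerivMap_apply, LinearMap.zero_apply, sub_eq_zero]
  refine ⟨fun h g => h _, fun h α => ?_⟩
  induction α using MonoidAlgebra.induction_on with
  | of g => exact h g
  | add α α' hα hα' => rw [add_mul, mul_add, hα, hα']
  | smul r α hα => rw [smul_mul_assoc, mul_smul_comm, hα]

variable [Finite G]

variable (F G) in
noncomputable def ofClassFunction : (ConjClasses G → F) →ₗ[F] MonoidAlgebra F G :=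
  (coeffLinearEquiv F).symm.toLinearMap ∘ₗ
    (Finsupp.linearEquivFunOnFinite F F G).symm.toLinearMap ∘ₗ
      LinearMap.funLeft F F ConjClasses.mk

theorem coeff_ofClassFunction (φ : ConjClasses G → F) (x : G) :
    (ofClassFunction F G φ).coeff x = φ (ConjClasses.mk x) :=
  rfl

theorem ofClassFunction_injective : Function.Injective (ofClassFunction F G) := by
  intro φ ψ h
  funext c
  obtain ⟨x, rfl⟩ := ConjClasses.mk_surjective c
  simpa [coeff_ofClassFunction] using congr(($h).coeff x)

theorem range_ofClassFunction :
    LinearMap.range (ofClassFunction F G) = LinearMap.ker (innerDerivMap F G) := by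
  ext β
  rw [mem_ker_innerDerivMap_iff]
  constructor
  · rintro ⟨φ, rfl⟩ g x
    simp only [coeff_ofClassFunction]
    exact congrArg φ (ConjClasses.mk_eq_mk_iff_isConj.mpr (isConj_iff.mpr ⟨g, rfl⟩).symm)
  · intro h
    refine ⟨fun c => β.coeff (Function.surjInv ConjClasses.mk_surjective c), ?_⟩
    ext x
    obtain ⟨g, hg⟩ := isConj_iff.mp <| ConjClasses.mk_eq_mk_iff_isConj.mp <|
      Function.surjInv_eq ConjClasses.mk_surjective (ConjClasses.mk x)
    rw [coeff_ofClassFunction, ← h g, hg]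

theorem finrank_ker_innerDerivMap :
    Module.finrank F (LinearMap.ker (innerDerivMap F G)) = Nat.card (ConjClasses G) := by
  have := Fintype.ofFinite (ConjClasses G)
  rw [← range_ofClassFunction, LinearMap.finrank_range_of_inj ofClassFunction_injective,
    Module.finrank_pi, Nat.card_eq_fintype_card]

theorem finrank_range_innerDerivMap_add_card_conjClasses :
    Module.finrank F (LinearMap.range (innerDerivMap F G)) + Nat.card (ConjClasses G) =
      Nat.card G := by
  have := Fintype.ofFinite G
  rw [← finrank_ker_innerDerivMap (F := F), LinearMap.finrank_range_add_finrank_ker,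
    Module.finrank_eq_card_basis (basis G F), Nat.card_eq_fintype_card]

end MonoidAlgebra

open Finset

theorem ZMod.card_filter_natCast_mul_eq_zero (m k : ℕ) [NeZero m] :
    #{x : ZMod m | (k : ZMod m) * x = 0} = m.gcd k := by
  have := IsAddCyclic.card_nsmulAddMonoidHom_ker (ZMod m) k
  rw [Nat.card_zmod, Nat.card_eq_fintype_card] at this
  rw [← this, ← Fintype.card_coe]
  exact Fintype.card_congr (Equiv.subtypeEquivRight fun x => by simp)

theorem ZMod.card_filter_natCast_mul_eq (m k : ℕ) [NeZero m] (y : ZMod m) :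
    #{x : ZMod m | (k : ZMod m) * y = k * x} = m.gcd k := by
  rw [← ZMod.card_filter_natCast_mul_eq_zero]
  refine card_equiv (Equiv.subRight y) fun x => ?_
  simp [mul_sub, sub_eq_zero, eq_comm]

section Metacyclic

variable {G : Type*} [Group G] {a b : G} {m k : ℕ}

theorem pow_eq_pow_iff_natCast_eq (ha : orderOf a = m) {i j : ℕ} :
    a ^ i = a ^ j ↔ (i : ZMod m) = j := by
  rw [pow_eq_pow_iff_modEq, ha, ZMod.natCast_eq_natCast_iff]

theorem mul_pow_eq_pow_mul (hb : b ^ 2 = 1) (hba : b * a * b = a ^ (k + 1)) (j : ℕ) :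
    b * a ^ j = a ^ ((k + 1) * j) * b := by
  have hb' : b⁻¹ = b := inv_eq_of_mul_eq_one_right (by rw [← sq, hb])
  calc b * a ^ j = (b * a * b⁻¹) ^ j * b := by rw [conj_pow, inv_mul_cancel_right]
    _ = a ^ ((k + 1) * j) * b := by rw [hb', hba, pow_mul]

theorem commute_pow_pow_mul_iff (ha : orderOf a = m) (hb : b ^ 2 = 1)
    (hba : b * a * b = a ^ (k + 1)) (i j : ℕ) :
    Commute (a ^ i) (a ^ j * b) ↔ (k : ZMod m) * i = 0 := by
  rw [commute_iff_eq, mul_assoc, mul_pow_eq_pow_mul hb hba, ← mul_assoc, ← mul_assoc,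
    mul_left_inj, ← pow_add, ← pow_add, pow_eq_pow_iff_natCast_eq ha]
  push_cast
  constructor <;> intro h <;> linear_combination -h

theorem commute_pow_mul_pow_mul_iff (ha : orderOf a = m) (hb : b ^ 2 = 1)
    (hba : b * a * b = a ^ (k + 1)) (i j : ℕ) :
    Commute (a ^ i * b) (a ^ j * b) ↔ (k : ZMod m) * i = k * j := by
  have hbb : b * b = 1 := by rw [← sq, hb]
  rw [commute_iff_eq, mul_assoc, mul_assoc, ← mul_assoc b, ← mul_assoc b,
    mul_pow_eq_pow_mul hb hba, mul_pow_eq_pow_mul hb hba, mul_assoc _ b, mul_assoc _ b, hbb,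
    mul_one, mul_one, ← pow_add, ← pow_add, pow_eq_pow_iff_natCast_eq ha]
  push_cast
  constructor <;> intro h <;> linear_combination -h

theorem bijective_sumElim_pow_val (ha : orderOf a = m) [NeZero m] (hbz : b ∉ Subgroup.zpowers a)
    (hG : Nat.card G = 2 * m) :
    Function.Bijective
      (Sum.elim (fun i : ZMod m => a ^ i.val) (fun i : ZMod m => a ^ i.val * b)) := by
  have : Finite G := Nat.finite_of_card_ne_zero (by have := NeZero.ne m; omega)
  have hinj : Function.Injective fun i : ZMod m => a ^ i.val := fun i j h => by
    rwa [pow_eq_pow_iff_natCast_eq ha, ZMod.natCast_zmod_val, ZMod.natCast_zmod_val] at h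
  refine Function.Injective.bijective_of_nat_card_le ?_ (by simp [hG, two_mul])
  refine hinj.sumElim ((mul_left_injective b).comp hinj) fun i j h => hbz ?_
  rw [eq_inv_mul_of_mul_eq h.symm]
  exact Subgroup.mul_mem _ (Subgroup.inv_mem _ (Subgroup.npow_mem_zpowers a _))
    (Subgroup.npow_mem_zpowers a _)

theorem card_commute_of_mul_mul_eq_pow (ha : orderOf a = m) [NeZero m] (hb : b ^ 2 = 1)
    (hba : b * a * b = a ^ (k + 1)) (hbz : b ∉ Subgroup.zpowers a) (hG : Nat.card G = 2 * m) :
    Nat.card {p : G × G // Commute p.1 p.2} = m * (m + 3 * m.gcd k) := by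
  classical
  set e := Equiv.ofBijective _ (bijective_sumElim_pow_val ha hbz hG)
  have hrefl_rot (i j : ℕ) : Commute (a ^ i * b) (a ^ j) ↔ (k : ZMod m) * j = 0 :=
    Commute.symm_iff.trans (commute_pow_pow_mul_iff ha hb hba j i)
  rw [← Nat.card_congr ((e.prodCongr e).subtypeEquiv fun _ => Iff.rfl), Nat.card_eq_fintype_card,
    Fintype.card_subtype, card_filter, Fintype.sum_prod_type]
  simp only [Fintype.sum_sum_type, e, Equiv.prodCongr_apply, Equiv.ofBijective_apply, Prod.map,
    Sum.elim_inl, Sum.elim_inr, Commute.pow_pow_self, commute_pow_pow_mul_iff ha hb hba, hrefl_rot,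
    commute_pow_mul_pow_mul_iff ha hb hba, ZMod.natCast_zmod_val]
  -- Powers of `a` commute; each of the other three blocks contributes `m * m.gcd k` pairs.
  simp only [if_true, sum_const, card_univ, ZMod.card, smul_eq_mul, mul_one, ← mul_sum, sum_boole,
    ZMod.card_filter_natCast_mul_eq_zero, ZMod.card_filter_natCast_mul_eq, sum_add_distrib,
    Nat.cast_id]
  ring

theorem two_mul_card_conjClasses_of_mul_mul_eq_pow (ha : orderOf a = m) [NeZero m] (hb : b ^ 2 = 1)
    (hba : b * a * b = a ^ (k + 1)) (hbz : b ∉ Subgroup.zpowers a) (hG : Nat.card G = 2 * m) :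
    2 * Nat.card (ConjClasses G) = m + 3 * m.gcd k := by
  have h := card_comm_eq_card_conjClasses_mul_card G
  rw [card_commute_of_mul_mul_eq_pow ha hb hba hbz hG, hG] at h
  refine Nat.eq_of_mul_eq_mul_left (NeZero.pos m) ?_
  linarith

end Metacyclic

theorem Nat.gcd_four_mul_two_mul_sub_two {n : ℕ} (hn : 0 < n) :
    (4 * n).gcd (2 * n - 2) = if Even n then 2 else 4 := by
  obtain ⟨t, rfl⟩ : ∃ t, n = t + 1 := ⟨n - 1, by omega⟩
  rw [show 4 * (t + 1) = 2 * (2 + 2 * t) by ring, show 2 * (t + 1) - 2 = 2 * t by omega,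
    Nat.gcd_mul_left, Nat.gcd_add_mul_right_left]
  rcases Nat.even_or_odd t with ht | ht
  · simp [Nat.gcd_eq_left (even_iff_two_dvd.mp ht), Nat.even_add_one, ht]
  · simp [Nat.coprime_two_left.mpr ht, ht]

theorem Subgroup.notMem_zpowers_of_closure_pair_eq_top {G : Type*} [Group G] {a b : G}
    (hgen : Subgroup.closure ({a, b} : Set G) = ⊤) (ha : Subgroup.zpowers a ≠ ⊤) :
    b ∉ Subgroup.zpowers a := fun hb => ha <| by
  rw [eq_top_iff, ← hgen, Subgroup.closure_le, Set.insert_subset_iff, Set.singleton_subset_iff]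
  exact ⟨Subgroup.mem_zpowers a, hb⟩

theorem finrank_innerDerivations_semidihedral_general (F : Type*) [Field F] (n : ℕ)
    (G : Type*) [Group G] [Fintype G] (hG : Fintype.card G = 8 * n)
    (a b : G) (ha : orderOf a = 4 * n) (hb : b ^ 2 = 1)
    (hba : b * a * b = a ^ (2 * n - 1))
    (hgen : Subgroup.closure ({a, b} : Set G) = ⊤) :
    Module.finrank F (LinearMap.range (innerDerivMap F G)) =
      if Even n then 3 * (2 * n - 1) else 6 * (n - 1) := by
  have hn : 0 < n := by have := Fintype.card_pos (α := G); omega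
  have : NeZero (4 * n) := ⟨by omega⟩
  have hcard : Nat.card G = 2 * (4 * n) := by rw [Nat.card_eq_fintype_card, hG]; ring
  have hba' : b * a * b = a ^ (2 * n - 2 + 1) := by rwa [show 2 * n - 2 + 1 = 2 * n - 1 by omega]
  have hbz : b ∉ Subgroup.zpowers a :=
    Subgroup.notMem_zpowers_of_closure_pair_eq_top hgen fun h => by
      have := Nat.card_zpowers a
      rw [h, Subgroup.card_top, ha, hcard] at this
      omega
  have hconj := two_mul_card_conjClasses_of_mul_mul_eq_pow ha hb hba' hbz hcard
  have hdim := MonoidAlgebra.finrank_range_innerDerivMap_add_card_conjClasses (F := F) (G := G)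
  rw [Nat.gcd_four_mul_two_mul_sub_two hn] at hconj
  split_ifs at hconj ⊢ <;> omega

/-- If `G` is the semidihedral group `SD_{8n}` and `F` is any field, then the
space of inner derivations of `FG` has dimension `3(2n-1)` for `n` even and
`6(n-1)` for `n` odd. -/
theorem finrank_innerDerivations_semidihedral (F : Type*) [Field F] (n : ℕ) (hn : 0 < n)
    (G : Type*) [Group G] [Fintype G] (hG : Fintype.card G = 8 * n)
    (a b : G) (ha : orderOf a = 4 * n) (hb : b ^ 2 = 1)
    (hba : b * a * b = a ^ (2 * n - 1))
    (hgen : Subgroup.closure ({a, b} : Set G) = ⊤) :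
    Module.finrank F (LinearMap.range (innerDerivMap F G)) =
      if Even n then 3 * (2 * n - 1) else 6 * (n - 1) :=
  finrank_innerDerivations_semidihedral_general F n G hG a b ha hb hba hgen
end

section
/- Let n be a positive integer, let G be a finite group of order 8n, and let a, b ∈ G with orderOf(a) = 4n, b² = 1, bab = a^{2n−1}, and G generated by {a, b} (so G ≅ SD_{8n}, the semidihedral group of order 8n). Let F be a field that is an algebraic extension of its prime field, of characteristic 0 or of odd prime characteristic p with p ∤ n. Then every derivation of the group algebra FG is inner: for every additive map d : FG → FG satisfying d(xy) = d(x)y + x d(y) for all x, y, there exists β ∈ FG such that d(α) = αβ − βα for all α ∈ FG. -/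
open MonoidAlgebra

/-!
Because `|G| = 8n` is invertible in `F`, the averaging argument applies: with
`β₀ = ∑ₕ d(h) h⁻¹` one has `|G| d(g) = β₀ g - g β₀` for every `g ∈ G`, so `-β₀ / |G|` implements
`d` on the group basis, hence on all of `FG` once `d` is known to be `F`-linear. Linearity holds
because `c ↦ d(c • 1)` is a derivation of `F` into `FG`; it kills the prime field, hence all of
`F`, which is algebraic and therefore separable over its perfect prime field.
-/

theorem Subfield.perfectField_bot_s19 (K : Type*) [Field K] : PerfectField (⊥ : Subfield K) := by
  obtain ⟨p, _⟩ := CharP.exists K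
  rcases CharP.char_is_prime_or_zero K p with hp | rfl
  · have : Fact p.Prime := ⟨hp⟩
    let := Subfield.fintypeBot K p
    infer_instance
  · have := CharP.charP_to_charZero K
    infer_instance

namespace Derivation

variable {R K M : Type*} [CommRing R] [Field K] [Algebra R K] [AddCommGroup M] [Module K M]
  [Module R M]

def constants (D : Derivation R K M) : Subfield K where
  carrier := {x | D x = 0}
  zero_mem' := D.map_zero
  one_mem' := D.map_one_eq_zero
  add_mem' {x y} hx hy := by simp_all
  neg_mem' {x} hx := by simp_all
  mul_mem' {x y} hx hy := by simp_all
  inv_mem' x hx := by simp_all [leibniz_inv]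

theorem map_eq_zero_of_mem_bot (D : Derivation R K M) {x : K} (hx : x ∈ (⊥ : Subfield K)) :
    D x = 0 :=
  bot_le (a := D.constants) hx

def toBot (D : Derivation R K M) : Derivation (⊥ : Subfield K) K M :=
  Derivation.mk'
    { toFun := D
      map_add' := D.map_add
      map_smul' := fun k x => by
        simp [Subfield.smul_def, leibniz, D.map_eq_zero_of_mem_bot k.2] }
    fun x y => D.leibniz x y

@[simp] theorem toBot_apply (D : Derivation R K M) (x : K) : D.toBot x = D x := rfl

theorem eq_zero_of_isSeparable {k : Type*} [Field k] [Algebra k K] [Module k M]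
    [Algebra.IsSeparable k K] (D : Derivation k K M) : D = 0 := by
  ext x
  have hsep := Algebra.IsSeparable.isSeparable k x
  have h := D.map_aeval (minpoly k x) x
  rw [minpoly.aeval, D.map_zero, eq_comm, smul_eq_zero] at h
  exact h.resolve_left (hsep.aeval_derivative_ne_zero (minpoly.aeval k x))

theorem eq_zero_of_isAlgebraic_bot [Algebra.IsAlgebraic (⊥ : Subfield K) K]
    (D : Derivation R K M) : D = 0 := by
  have := Subfield.perfectField_bot_s19 K
  ext x
  simpa using congr($(D.toBot.eq_zero_of_isSeparable) x)

end Derivation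

section LeibnizMap

variable {F A : Type*} [Field F] [Ring A] [Algebra F A] (d : A →+ A)
  (hd : ∀ x y : A, d (x * y) = d x * y + x * d y)
include hd

def Derivation.ofLeibnizAlgebraMap : Derivation ℤ F A :=
  Derivation.mk' ((d.comp (algebraMap F A).toAddMonoidHom).toIntLinearMap) fun x y => by
    simp only [AddMonoidHom.coe_toIntLinearMap, AddMonoidHom.coe_comp, Function.comp_apply,
      RingHom.toAddMonoidHom_eq_coe, AddMonoidHom.coe_coe, map_mul, hd, Algebra.smul_def]
    rw [Algebra.commutes y, add_comm]

theorem map_algebraMap_eq_zero_of_leibniz [Algebra.IsAlgebraic (⊥ : Subfield F) F] (c : F) :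
    d (algebraMap F A c) = 0 :=
  congr($((Derivation.ofLeibnizAlgebraMap d hd).eq_zero_of_isAlgebraic_bot) c)

theorem map_smul_of_leibniz [Algebra.IsAlgebraic (⊥ : Subfield F) F] (c : F) (x : A) :
    d (c • x) = c • d x := by
  rw [Algebra.smul_def, hd, map_algebraMap_eq_zero_of_leibniz d hd, zero_mul, zero_add,
    Algebra.smul_def]

end LeibnizMap

namespace MonoidAlgebra

variable {k G : Type*} [CommRing k] [Group G] [Fintype G] (d : k[G] →+ k[G])

noncomputable def derivationAverage : k[G] :=
  ∑ h : G, d (of k G h) * of k G h⁻¹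

variable (hd : ∀ x y : k[G], d (x * y) = d x * y + x * d y)
include hd

theorem card_smul_map_of (g : G) :
    (Fintype.card G : k) • d (of k G g) =
      derivationAverage d * of k G g - of k G g * derivationAverage d := by
  refine eq_sub_of_add_eq ?_
  symm
  calc derivationAverage d * of k G g
      = ∑ h : G, d (of k G (g * h)) * of k G h⁻¹ := by
        rw [derivationAverage, Finset.sum_mul]
        refine Fintype.sum_equiv (Equiv.mulLeft g⁻¹) _ _ fun h => ?_
        simp [mul_assoc]
    _ = ∑ h : G, (d (of k G g) + of k G g * (d (of k G h) * of k G h⁻¹)) := by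
        refine Finset.sum_congr rfl fun h _ => ?_
        rw [map_mul, hd, add_mul, mul_assoc, ← map_mul, mul_inv_cancel, map_one, mul_one,
          mul_assoc]
    _ = (Fintype.card G : k) • d (of k G g) + of k G g * derivationAverage d := by
        rw [Finset.sum_add_distrib, Finset.sum_const, Finset.card_univ, Nat.cast_smul_eq_nsmul,
          derivationAverage, Finset.mul_sum]

theorem exists_eq_mul_sub_mul_of_isUnit_card_s19 (hlin : ∀ (c : k) (x : k[G]), d (c • x) = c • d x)
    (hcard : IsUnit (Fintype.card G : k)) :
    ∃ β : k[G], ∀ α : k[G], d α = α * β - β * α := by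
  obtain ⟨β, hβ⟩ : ∃ β : k[G], ∀ g : G, d (of k G g) = of k G g * β - β * of k G g := by
    refine ⟨-(↑hcard.unit⁻¹ : k) • derivationAverage d, fun g => ?_⟩
    rw [← one_smul k (d _), ← hcard.val_inv_mul, mul_smul, card_smul_map_of d hd, smul_sub,
      neg_smul, mul_neg, neg_mul, sub_neg_eq_add, neg_add_eq_sub, mul_smul_comm, smul_mul_assoc]
  refine ⟨β, fun α => ?_⟩
  induction α using MonoidAlgebra.induction_on with
  | of g => exact hβ g
  | add x y hx hy => rw [map_add, hx, hy, add_mul, mul_add]; abel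
  | smul c x hx => rw [hlin, hx, smul_sub, smul_mul_assoc, mul_smul_comm]

end MonoidAlgebra

theorem derivations_semidihedral_inner_general (F : Type*) [Field F]
    [Algebra.IsAlgebraic (⊥ : Subfield F) F] (n : ℕ)
    (G : Type*) [Group G] [Fintype G] (hG : Fintype.card G = 8 * n)
    (hchar : ringChar F = 0 ∨
      (Nat.Prime (ringChar F) ∧ Odd (ringChar F) ∧ ¬ ringChar F ∣ n))
    (d : MonoidAlgebra F G →+ MonoidAlgebra F G)
    (hd : ∀ x y : MonoidAlgebra F G, d (x * y) = d x * y + x * d y) :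
    ∃ β : MonoidAlgebra F G, ∀ α : MonoidAlgebra F G, d α = α * β - β * α := by
  have hcard : IsUnit (Fintype.card G : F) := by
    refine isUnit_iff_ne_zero.2 ?_
    rcases hchar with h0 | ⟨hp, hodd, hndvd⟩
    · have := (CharP.ringChar_zero_iff_CharZero F).1 h0
      exact Nat.cast_ne_zero.2 Fintype.card_ne_zero
    · have := ringChar.charP F
      have h8 : ¬ ringChar F ∣ 8 := fun h =>
        hp.one_lt.ne' ((hodd.coprime_two_right.pow_right 3).eq_one_of_dvd h)
      rw [hG, Ne, CharP.cast_eq_zero_iff F (ringChar F)]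
      exact fun h => (hp.dvd_mul.1 h).elim h8 hndvd
  exact exists_eq_mul_sub_mul_of_isUnit_card_s19 d hd (map_smul_of_leibniz d hd) hcard

/-- If `G` is the semidihedral group `SD_{8n}` and `F` is an algebraic extension
of its prime field (the bottom subfield of `F`) of characteristic `0` or of odd
prime characteristic `p` with `p ∤ n`, then every derivation of the group algebra
`FG` is inner. -/
theorem derivations_semidihedral_inner (F : Type*) [Field F]
    [Algebra.IsAlgebraic (⊥ : Subfield F) F] (n : ℕ) (hn : 0 < n)
    (G : Type*) [Group G] [Fintype G] (hG : Fintype.card G = 8 * n)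
    (a b : G) (ha : orderOf a = 4 * n) (hb : b ^ 2 = 1)
    (hba : b * a * b = a ^ (2 * n - 1))
    (hgen : Subgroup.closure ({a, b} : Set G) = ⊤)
    (hchar : ringChar F = 0 ∨
      (Nat.Prime (ringChar F) ∧ Odd (ringChar F) ∧ ¬ ringChar F ∣ n))
    (d : MonoidAlgebra F G →+ MonoidAlgebra F G)
    (hd : ∀ x y : MonoidAlgebra F G, d (x * y) = d x * y + x * d y) :
    ∃ β : MonoidAlgebra F G, ∀ α : MonoidAlgebra F G, d α = α * β - β * α :=
  derivations_semidihedral_inner_general F n G hG hchar d hd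
end
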